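/- arXiv:2410.01073 — 6 statements merged into one kernel-verified Lean document; each statement's English description precedes it below -/
import Mathlib

section
/- Let M be a real symmetric n×n matrix with eigenvalues λ₁(M), …, λₙ(M) ordered so that |λ₁(M)| ≥ |λ₂(M)| ≥ … ≥ |λₙ(M)|. Then for every real n×n matrix N of rank at most k (with k ≤ n), the sum of the squared tail eigenvalues satisfies ∑_{i=k+1}^{n} λᵢ(M)² ≤ ‖M − N‖_F². -/
/-!
Let `P` be the orthogonal projection onto `ker N`, so `tr P = n - rank N ≥ n - k` and
`(M - N) P = M P`. Right multiplication by an orthogonal projection does not increase the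
Frobenius norm, hence `‖M - N‖_F² ≥ ‖M P‖_F² = tr (M² P) = ∑ λᵢ² qᵢ` with `qᵢ = (Uᵀ P U)ᵢᵢ`.
These weights lie in `[0, 1]` and have total mass `tr P ≥ n - k`, and any such weighting of the
decreasing sequence `λᵢ²` is at least the sum of its last `n - k` terms.
-/

open Matrix Finset
open scoped MatrixOrder

theorem Fin.card_filter_le_val (n k : ℕ) : #{i : Fin n | k ≤ (i : ℕ)} = n - k := by
  have := card_filter_add_card_filter_not (s := univ) (fun i : Fin n => (i : ℕ) < k)
  rw [card_univ, Fintype.card_fin, card_filter_val_lt] at this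
  simp only [not_lt] at this
  omega

theorem Fin.sum_filter_le_val_le_sum_mul {n k : ℕ} {a q : Fin n → ℝ} (ha : Antitone a)
    (ha₀ : ∀ i, 0 ≤ a i) (hq : ∀ i, q i ∈ Set.Icc 0 1) (hsum : ((n - k : ℕ) : ℝ) ≤ ∑ i, q i) :
    ∑ i ∈ univ.filter (fun i : Fin n => k ≤ (i : ℕ)), a i ≤ ∑ i, a i * q i := by
  -- `a i ≥ c` for `i < k` and `a i ≤ c` for `i ≥ k`
  set c : ℝ := if h : k < n then a ⟨k, h⟩ else 0
  have hc₀ : 0 ≤ c := by unfold c; split_ifs <;> simp [ha₀]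
  have hpointwise : ∀ i : Fin n, c * (q i - if k ≤ (i : ℕ) then 1 else 0) ≤
      a i * q i - if k ≤ (i : ℕ) then a i else 0 := by
    intro i
    obtain ⟨hq₀, hq₁⟩ := hq i
    split_ifs with hki
    · have : a i ≤ c := by
        unfold c; rw [dif_pos (by omega)]; exact ha (Fin.mk_le_of_le_val hki)
      nlinarith
    · have : c ≤ a i := by
        unfold c; split_ifs with hkn
        · exact ha (Fin.le_def.mpr (by simp; omega))
        · exact ha₀ i
      nlinarith
  have hcount : ∑ i : Fin n, (if k ≤ (i : ℕ) then 1 else 0 : ℝ) = (n - k : ℕ) := by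
    rw [sum_boole, Fin.card_filter_le_val]
  have := sum_le_sum fun i (_ : i ∈ univ) => hpointwise i
  rw [← mul_sum, sum_sub_distrib, sum_sub_distrib, hcount, ← sum_filter] at this
  linarith [mul_nonneg hc₀ (sub_nonneg.mpr hsum)]

theorem Matrix.trace_eq_trace_toEuclideanLin {𝕜 n : Type*} [RCLike 𝕜] [Fintype n] [DecidableEq n]
    (A : Matrix n n 𝕜) : A.trace = LinearMap.trace 𝕜 _ (toEuclideanLin A) := by
  rw [LinearMap.trace_eq_matrix_trace 𝕜 (PiLp.basisFun 2 𝕜 n), toEuclideanLin, toLpLin_eq_toLin,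
    LinearMap.toMatrix_toLin]

theorem Matrix.finrank_ker_toEuclideanLin {𝕜 n : Type*} [RCLike 𝕜] [Fintype n] [DecidableEq n]
    (A : Matrix n n 𝕜) :
    Module.finrank 𝕜 (LinearMap.ker (toEuclideanLin A)) = Fintype.card n - A.rank := by
  have hrank : A.rank = Module.finrank 𝕜 (LinearMap.range (toEuclideanLin A)) :=
    rank_eq_finrank_range_toLin A (PiLp.basisFun 2 𝕜 n) (PiLp.basisFun 2 𝕜 n)
  have := LinearMap.finrank_range_add_finrank_ker (toEuclideanLin A)
  rw [finrank_euclideanSpace] at this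
  omega

theorem Submodule.trace_starProjection {𝕜 E : Type*} [RCLike 𝕜] [NormedAddCommGroup E]
    [InnerProductSpace 𝕜 E] [FiniteDimensional 𝕜 E] (K : Submodule 𝕜 E) :
    LinearMap.trace 𝕜 E K.starProjection = Module.finrank 𝕜 K :=
  LinearMap.IsProj.trace ⟨K.starProjection_apply_mem, fun _ => K.starProjection_eq_self_iff.mpr⟩

theorem Matrix.exists_isStarProjection_mul_eq_zero {𝕜 n : Type*} [RCLike 𝕜] [Fintype n]
    [DecidableEq n] (N : Matrix n n 𝕜) :
    ∃ P : Matrix n n 𝕜, IsStarProjection P ∧ N * P = 0 ∧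
      P.trace = (Fintype.card n - N.rank : ℕ) := by
  set K := LinearMap.ker (toEuclideanLin N)
  set e : Matrix n n 𝕜 ≃⋆ₐ[𝕜] _ := toEuclideanCLM
  refine ⟨e.symm K.starProjection, isStarProjection_starProjection.map e.symm, ?_, ?_⟩
  · refine EquivLike.injective e ?_
    rw [map_mul, StarAlgEquiv.apply_symm_apply, map_zero]
    ext1 x
    exact LinearMap.mem_ker.mp (K.starProjection_apply_mem x)
  · rw [trace_eq_trace_toEuclideanLin, ← coe_toEuclideanCLM_eq_toEuclideanLin,
      StarAlgEquiv.apply_symm_apply, K.trace_starProjection, finrank_ker_toEuclideanLin]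

namespace Matrix

variable {m n : Type*} [Fintype m] [Fintype n]

theorem sum_sum_sq_eq_trace_transpose_mul_self (A : Matrix m n ℝ) :
    ∑ i, ∑ j, A i j ^ 2 = (Aᵀ * A).trace := by
  rw [trace, sum_comm]
  simp only [diag_apply, mul_apply, transpose_apply, sq]

theorem _root_.IsStarProjection.transpose_eq {P : Matrix n n ℝ} (hP : IsStarProjection P) :
    Pᵀ = P := by
  rw [← conjTranspose_eq_transpose_of_trivial, ← star_eq_conjTranspose, hP.isSelfAdjoint.star_eq]

theorem _root_.IsStarProjection.sum_sum_sq_mul_eq_trace {P : Matrix n n ℝ}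
    (hP : IsStarProjection P) (B : Matrix m n ℝ) :
    ∑ i, ∑ j, (B * P) i j ^ 2 = (Bᵀ * B * P).trace := by
  rw [sum_sum_sq_eq_trace_transpose_mul_self, transpose_mul, hP.transpose_eq, Matrix.mul_assoc,
    trace_mul_comm]
  simp only [Matrix.mul_assoc, hP.isIdempotentElem.eq]

theorem _root_.IsStarProjection.sum_sum_sq_mul_le {P : Matrix n n ℝ}
    (hP : IsStarProjection P) (B : Matrix m n ℝ) :
    ∑ i, ∑ j, (B * P) i j ^ 2 ≤ ∑ i, ∑ j, B i j ^ 2 := by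
  classical
  have hsplit : ∑ i, ∑ j, B i j ^ 2 =
      ∑ i, ∑ j, (B * P) i j ^ 2 + ∑ i, ∑ j, (B * (1 - P) : Matrix m n ℝ) i j ^ 2 := by
    rw [hP.sum_sum_sq_mul_eq_trace, hP.one_sub.sum_sum_sq_mul_eq_trace, ← trace_add,
      ← Matrix.mul_add, add_sub_cancel, Matrix.mul_one, sum_sum_sq_eq_trace_transpose_mul_self]
  have : 0 ≤ ∑ i, ∑ j, (B * (1 - P) : Matrix m n ℝ) i j ^ 2 := by positivity
  linarith

omit [Fintype n] in
theorem diag_mem_Icc_of_nonneg_of_le_one [Finite n] [DecidableEq n] {Q : Matrix n n ℝ}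
    (h₀ : 0 ≤ Q) (h₁ : Q ≤ 1) (i : n) : Q i i ∈ Set.Icc 0 1 := by
  have h₁' : 0 ≤ (1 - Q) i i := (nonneg_iff_posSemidef.mp (sub_nonneg.mpr h₁)).diag_nonneg
  rw [sub_apply, one_apply_eq] at h₁'
  exact ⟨(nonneg_iff_posSemidef.mp h₀).diag_nonneg, by linarith⟩

theorem _root_.IsStarProjection.diag_transpose_mul_mul_mem_Icc [DecidableEq n]
    {P U : Matrix n n ℝ} (hP : IsStarProjection P) (hU : Uᵀ * U = 1) (i : n) :
    (Uᵀ * P * U) i i ∈ Set.Icc 0 1 := by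
  rw [← conjTranspose_eq_transpose_of_trivial, ← star_eq_conjTranspose] at hU ⊢
  refine diag_mem_Icc_of_nonneg_of_le_one (star_left_conjugate_nonneg hP.nonneg U) ?_ i
  simpa [hU] using star_left_conjugate_le_conjugate hP.le_one U

theorem sum_sum_sq_conj_diagonal_mul {P U : Matrix n n ℝ} [DecidableEq n]
    (hP : IsStarProjection P) (hU : Uᵀ * U = 1) (d : n → ℝ) :
    ∑ i, ∑ j, (U * diagonal d * Uᵀ * P) i j ^ 2 = ∑ i, d i ^ 2 * (Uᵀ * P * U) i i := by
  have hsq : (U * diagonal d * Uᵀ)ᵀ * (U * diagonal d * Uᵀ) =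
      U * diagonal (fun i => d i ^ 2) * Uᵀ := by
    simp only [transpose_mul, transpose_transpose, diagonal_transpose, Matrix.mul_assoc]
    rw [← Matrix.mul_assoc Uᵀ, hU, Matrix.one_mul, ← Matrix.mul_assoc (diagonal d),
      diagonal_mul_diagonal]
    simp only [sq]
  rw [hP.sum_sum_sq_mul_eq_trace, hsq, Matrix.mul_assoc, trace_mul_comm, ← Matrix.mul_assoc,
    trace_mul_comm]
  simp only [trace, diag_apply, diagonal_mul]

end Matrix

theorem tail_eigenvalues_le_low_rank_approx_general
    (n k : ℕ)
    (M N : Matrix (Fin n) (Fin n) ℝ)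
    (lam : Fin n → ℝ) (U : Matrix (Fin n) (Fin n) ℝ)
    (hU : Uᵀ * U = 1)
    (hdecomp : M = U * Matrix.diagonal lam * Uᵀ)
    (hord : ∀ i j : Fin n, i ≤ j → |lam j| ≤ |lam i|)
    (hN : N.rank ≤ k) :
    ∑ i ∈ Finset.univ.filter (fun i : Fin n => k ≤ (i : ℕ)), (lam i) ^ 2 ≤
      ∑ u, ∑ v, (M u v - N u v) ^ 2 := by
  obtain ⟨P, hP, hNP, hPtrace⟩ := N.exists_isStarProjection_mul_eq_zero
  have hQtrace : (Uᵀ * P * U).trace = P.trace := by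
    rw [trace_mul_comm, ← Matrix.mul_assoc, mul_eq_one_comm.mp hU, Matrix.one_mul]
  have hmass : ((n - k : ℕ) : ℝ) ≤ (Uᵀ * P * U).trace := by
    rw [hQtrace, hPtrace, Fintype.card_fin]
    exact_mod_cast Nat.sub_le_sub_left hN n
  calc _ ≤ ∑ i, lam i ^ 2 * (Uᵀ * P * U) i i :=
        Fin.sum_filter_le_val_le_sum_mul (fun i j hij => sq_le_sq.mpr (hord i j hij))
          (fun i => sq_nonneg _) (hP.diag_transpose_mul_mul_mem_Icc hU) hmass
    _ = ∑ u, ∑ v, ((M - N) * P) u v ^ 2 := by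
      rw [sub_mul, hNP, sub_zero, hdecomp, sum_sum_sq_conj_diagonal_mul hP hU]
    _ ≤ ∑ u, ∑ v, (M - N) u v ^ 2 := hP.sum_sum_sq_mul_le _
    _ = _ := rfl

/-- For a real symmetric `n × n` matrix `M` with eigenvalues `lam`
(given by an orthogonal eigendecomposition) ordered by decreasing absolute value,
and any matrix `N` of rank at most `k ≤ n`, the sum of the squared tail
eigenvalues `∑_{i=k+1}^n λ_i(M)²` is at most the squared Frobenius norm `‖M - N‖_F²`. -/
theorem tail_eigenvalues_le_low_rank_approx
    (n k : ℕ) (hk : k ≤ n)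
    (M N : Matrix (Fin n) (Fin n) ℝ)
    (hM : M.IsSymm)
    (lam : Fin n → ℝ) (U : Matrix (Fin n) (Fin n) ℝ)
    (hU : Uᵀ * U = 1)
    (hdecomp : M = U * Matrix.diagonal lam * Uᵀ)
    (hord : ∀ i j : Fin n, i ≤ j → |lam j| ≤ |lam i|)
    (hN : N.rank ≤ k) :
    ∑ i ∈ Finset.univ.filter (fun i : Fin n => k ≤ (i : ℕ)), (lam i) ^ 2 ≤
      ∑ u, ∑ v, (M u v - N u v) ^ 2 :=
  tail_eigenvalues_le_low_rank_approx_general n k M N lam U hU hdecomp hord hN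
end

section
/- Let (φᵢ)_{i≥1} be an orthonormal family in L²([0,1]) with Lebesgue measure, let (ωᵢ) be real numbers with ∑_{i=1}^{∞} |ωᵢ| < ∞ and ∑_{i=1}^{∞} ωᵢ² < ∞, and let W : [0,1]² → ℝ be measurable with 0 ≤ W ≤ 1, such that: (i) the partial sums ∑_{i=1}^{m} ωᵢ φᵢ(x)φᵢ(y) converge to W in L²([0,1]²) as m → ∞; (ii) for almost every x ∈ [0,1], ∑_{i=1}^{∞} ωᵢ φᵢ(x)² converges and equals W(x,x); and (iii) there is B ≥ 0 such that for every k, the function x ↦ ∑_{i=k+1}^{∞} ωᵢ φᵢ(x)² lies in L²([0,1]) with L² norm at most B. Let ξ₁, …, ξₙ be i.i.d. uniform random variables on [0,1], let M be the random n×n matrix with M_{uv} = W(ξ_u, ξ_v) for u ≠ v and M_{uu} = 0, and let N be the random n×n matrix with N_{uv} = ∑_{i=1}^{k} ωᵢ φᵢ(ξ_u)φᵢ(ξ_v) for all u, v. Then E[‖M − N‖_F²] ≤ 2 n² ∑_{i=k+1}^{∞} ωᵢ² + n (2 ∑_{i=1}^{∞} |ωᵢ| + 2B²). -/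
/-!
Split `‖M - N‖_F²` into its `n` diagonal and `n² - n` off-diagonal entries; since the `ξ u` are
i.i.d., each entry has the expectation of an integral over `[0,1]` or `[0,1]²`.

Off the diagonal, the functions `φᵢ ⊗ φᵢ` are orthonormal in `L²([0,1]²)`, so the error
`W - N_k` is within `‖W - N_m‖` of `∑_{k ≤ i < m} ωᵢ φᵢ ⊗ φᵢ`, whose squared norm is
`∑_{k ≤ i < m} ωᵢ²`; letting `m → ∞` bounds it by `2 ∑_{i ≥ k} ωᵢ²`.

On the diagonal, `N_k(x, x) = W(x, x) - ∑_{i ≥ k} ωᵢ φᵢ(x)²` almost everywhere, so its mean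
square is at most `2 ∫ W(x, x)² + 2 B² ≤ 2 ∫ W(x, x) + 2 B²`, and integrating the diagonal
series termwise gives `∫ W(x, x) = ∑ ωᵢ ≤ ∑ |ωᵢ|`.
-/

open MeasureTheory

/-- The uniform distribution on `[0,1]`. -/
noncomputable def unifMeasure : Measure ℝ := volume.restrict (Set.Icc (0:ℝ) 1)

instance : IsProbabilityMeasure unifMeasure :=
  ⟨by simp [unifMeasure, Real.volume_Icc]⟩

open Finset Filter Topology ProbabilityTheory

section TailSums

variable {G : Type*} [UniformSpace G] [AddCommGroup G] [IsUniformAddGroup G] [CompleteSpace G]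
  [T2Space G]

theorem Summable.sum_range_add_tsum_ge {f : ℕ → G} (hf : Summable f) (k : ℕ) :
    ∑ i ∈ range k, f i + ∑' i : {i // k ≤ i}, f i = ∑' i, f i := by
  rw [← hf.sum_add_tsum_subtype_compl (range k)]
  congr 1
  exact ((Equiv.subtypeEquivRight fun i => by simp).tsum_eq fun i : {i // k ≤ i} => f i).symm

theorem HasSum.sum_range_eq_sub_tsum_ge {f : ℕ → G} {a : G} (h : HasSum f a) (k : ℕ) :
    ∑ i ∈ range k, f i = a - ∑' i : {i // k ≤ i}, f i := by
  rw [← h.tsum_eq, ← h.summable.sum_range_add_tsum_ge k, add_sub_cancel_right]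

end TailSums

theorem integral_sq_add_le {α : Type*} [MeasurableSpace α] {μ : Measure α} {f g : α → ℝ}
    (hf : MemLp f 2 μ) (hg : MemLp g 2 μ) :
    ∫ x, (f x + g x) ^ 2 ∂μ ≤ 2 * ∫ x, f x ^ 2 ∂μ + 2 * ∫ x, g x ^ 2 ∂μ := by
  rw [← integral_const_mul, ← integral_const_mul,
    ← integral_add (hf.integrable_sq.const_mul 2) (hg.integrable_sq.const_mul 2)]
  refine integral_mono (hf.add hg).integrable_sq
    ((hf.integrable_sq.const_mul 2).add (hg.integrable_sq.const_mul 2)) fun x => ?_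
  nlinarith [sq_nonneg (f x - g x)]

theorem memLp_of_nonneg_of_le_one {α : Type*} [MeasurableSpace α] {μ : Measure α}
    [IsFiniteMeasure μ] {w : α → ℝ} (hw : AEStronglyMeasurable w μ)
    (hw01 : ∀ x, 0 ≤ w x ∧ w x ≤ 1) (p : ENNReal) : MemLp w p μ :=
  MemLp.of_bound hw 1 (ae_of_all _ fun x => by
    rw [Real.norm_eq_abs, abs_of_nonneg (hw01 x).1]; exact (hw01 x).2)

/-- Kept as functions rather than elements of `Lp`, so that pointwise series such as
`∑ ωᵢ ψᵢ(x)²` make sense. -/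
structure L2Orthonormal {α ι : Type*} [MeasurableSpace α] [DecidableEq ι] (μ : Measure α)
    (ψ : ι → α → ℝ) : Prop where
  memLp : ∀ i, MemLp (ψ i) 2 μ
  integral_mul : ∀ i j, ∫ x, ψ i x * ψ j x ∂μ = if i = j then 1 else 0

namespace L2Orthonormal

variable {α β ι : Type*} [MeasurableSpace α] [MeasurableSpace β] {μ : Measure α} {ν : Measure β}

section

variable [DecidableEq ι] {ψ : ι → α → ℝ} {χ : ι → β → ℝ}

theorem integrable_mul (h : L2Orthonormal μ ψ) (i j : ι) :
    Integrable (fun x => ψ i x * ψ j x) μ :=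
  (h.memLp i).integrable_mul (h.memLp j)

theorem integral_sq (h : L2Orthonormal μ ψ) (i : ι) : ∫ x, ψ i x ^ 2 ∂μ = 1 := by
  simpa only [sq, if_pos] using h.integral_mul i i

theorem prod [SFinite μ] [SFinite ν] (hψ : L2Orthonormal μ ψ) (hχ : L2Orthonormal ν χ) :
    L2Orthonormal (μ.prod ν) (fun i p => ψ i p.1 * χ i p.2) where
  memLp i := by
    refine (memLp_two_iff_integrable_sq ?_).2 ?_
    · exact ((hψ.memLp i).1.comp_quasiMeasurePreserving
        Measure.quasiMeasurePreserving_fst).mul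
        ((hχ.memLp i).1.comp_quasiMeasurePreserving Measure.quasiMeasurePreserving_snd)
    · simpa only [mul_pow] using (hψ.memLp i).integrable_sq.mul_prod (hχ.memLp i).integrable_sq
  integral_mul i j := by
    have h := integral_prod_mul (μ := μ) (ν := ν) (fun x => ψ i x * ψ j x)
      (fun y => χ i y * χ j y)
    simp_rw [mul_mul_mul_comm (ψ i _)]
    rw [h, hψ.integral_mul, hχ.integral_mul]
    split_ifs <;> simp

theorem integral_sq_sum (h : L2Orthonormal μ ψ) (c : ι → ℝ) (s : Finset ι) :
    ∫ x, (∑ i ∈ s, c i * ψ i x) ^ 2 ∂μ = ∑ i ∈ s, c i ^ 2 := by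
  have hexpand : ∀ x, (∑ i ∈ s, c i * ψ i x) ^ 2 = ∑ i ∈ s, ∑ j ∈ s, c i * c j * (ψ i x * ψ j x) :=
    fun x => by
      rw [sq, sum_mul_sum]
      exact sum_congr rfl fun i _ => sum_congr rfl fun j _ => by ring
  have hint : ∀ i j, Integrable (fun x => c i * c j * (ψ i x * ψ j x)) μ := fun i j =>
    (h.integrable_mul i j).const_mul _
  simp_rw [hexpand]
  rw [integral_finsetSum _ fun i _ => integrable_finsetSum _ fun j _ => hint i j]
  refine sum_congr rfl fun i hi => ?_
  rw [integral_finsetSum _ fun j _ => hint i j]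
  simp_rw [integral_const_mul, h.integral_mul, mul_ite, mul_one, mul_zero]
  rw [sum_ite_eq, if_pos hi, sq]

theorem memLp_sum (h : L2Orthonormal μ ψ) (c : ι → ℝ) (s : Finset ι) :
    MemLp (fun x => ∑ i ∈ s, c i * ψ i x) 2 μ :=
  memLp_finsetSum s fun i _ => (h.memLp i).const_mul (c i)

end

variable {ψ : ℕ → α → ℝ}

theorem integral_sq_sub_sum_range_le (h : L2Orthonormal μ ψ) {f : α → ℝ} {c : ℕ → ℝ}
    (hf : MemLp f 2 μ) (hc : Summable fun i => c i ^ 2)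
    (hlim : Tendsto (fun m => ∫ x, (f x - ∑ i ∈ range m, c i * ψ i x) ^ 2 ∂μ) atTop (𝓝 0))
    (k : ℕ) :
    ∫ x, (f x - ∑ i ∈ range k, c i * ψ i x) ^ 2 ∂μ ≤ 2 * ∑' i : {i // k ≤ i}, c i ^ 2 := by
  have hstep : ∀ m ≥ k, ∫ x, (f x - ∑ i ∈ range k, c i * ψ i x) ^ 2 ∂μ ≤
      2 * ∫ x, (f x - ∑ i ∈ range m, c i * ψ i x) ^ 2 ∂μ + 2 * ∑' i : {i // k ≤ i}, c i ^ 2 := by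
    intro m hkm
    have hsplit : ∀ x, f x - ∑ i ∈ range k, c i * ψ i x =
        (f x - ∑ i ∈ range m, c i * ψ i x) + ∑ i ∈ Ico k m, c i * ψ i x := fun x => by
      rw [← sum_range_add_sum_Ico _ hkm]; ring
    have hIco : ∑ i ∈ Ico k m, c i ^ 2 ≤ ∑' i : {i // k ≤ i}, c i ^ 2 := by
      have := hc.sum_le_tsum (range m) fun i _ => sq_nonneg (c i)
      rw [← hc.sum_range_add_tsum_ge k, ← sum_range_add_sum_Ico _ hkm] at this
      linarith
    simp_rw [hsplit]
    refine (integral_sq_add_le (hf.sub (h.memLp_sum c _)) (h.memLp_sum c _)).trans ?_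
    rw [h.integral_sq_sum]
    simp only [Pi.sub_apply]
    linarith
  have hrhs := (hlim.const_mul 2).add_const (2 * ∑' i : {i // k ≤ i}, c i ^ 2)
  rw [mul_zero, zero_add] at hrhs
  exact ge_of_tendsto hrhs (eventually_atTop.2 ⟨k, hstep⟩)

theorem memLp_sum_kernel [SFinite μ] (h : L2Orthonormal μ ψ) (c : ℕ → ℝ) (s : Finset ℕ) :
    MemLp (fun p : α × α => ∑ i ∈ s, c i * ψ i p.1 * ψ i p.2) 2 (μ.prod μ) := by
  simpa only [mul_assoc] using (h.prod h).memLp_sum c s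

theorem integral_sq_sub_sum_range_kernel_le [SFinite μ] (h : L2Orthonormal μ ψ)
    {W : α → α → ℝ} {c : ℕ → ℝ} (hW : MemLp (fun p : α × α => W p.1 p.2) 2 (μ.prod μ))
    (hc : Summable fun i => c i ^ 2)
    (hlim : Tendsto (fun m => ∫ x, ∫ y, (W x y - ∑ i ∈ range m, c i * ψ i x * ψ i y) ^ 2 ∂μ ∂μ)
      atTop (𝓝 0)) (k : ℕ) :
    ∫ p, (W p.1 p.2 - ∑ i ∈ range k, c i * ψ i p.1 * ψ i p.2) ^ 2 ∂μ.prod μ ≤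
      2 * ∑' i : {i // k ≤ i}, c i ^ 2 := by
  simpa only [mul_assoc] using (h.prod h).integral_sq_sub_sum_range_le hW hc
    (hlim.congr fun m => by
      simp only [mul_assoc]
      exact (integral_prod _ (hW.sub ((h.prod h).memLp_sum c (range m))).integrable_sq).symm) k

end L2Orthonormal

section Diagonal

variable {α : Type*} [MeasurableSpace α] {μ : Measure α}

theorem integral_eq_tsum_of_ae_hasSum {ι : Type*} [Countable ι] {ψ : ι → α → ℝ} {ω : ι → ℝ}
    {g : α → ℝ} (hnorm : ∀ i, ∫ x, ψ i x ^ 2 ∂μ = 1) (hω : Summable fun i => |ω i|)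
    (hg : ∀ᵐ x ∂μ, HasSum (fun i => ω i * ψ i x ^ 2) (g x)) :
    ∫ x, g x ∂μ = ∑' i, ω i := by
  have hint : ∀ i, Integrable (fun x => ω i * ψ i x ^ 2) μ := fun i =>
    (Integrable.of_integral_ne_zero (by rw [hnorm i]; exact one_ne_zero)).const_mul (ω i)
  have hint_norm : ∀ i, ∫ x, ‖ω i * ψ i x ^ 2‖ ∂μ = |ω i| := fun i => by
    simp_rw [norm_mul, Real.norm_eq_abs, abs_sq]
    rw [integral_const_mul, hnorm, mul_one]
  calc ∫ x, g x ∂μ = ∫ x, ∑' i, ω i * ψ i x ^ 2 ∂μ :=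
        integral_congr_ae (hg.mono fun x hx => hx.tsum_eq.symm)
    _ = ∑' i, ∫ x, ω i * ψ i x ^ 2 ∂μ :=
        (integral_tsum_of_summable_integral_norm hint (by simpa only [hint_norm])).symm
    _ = ∑' i, ω i := by simp_rw [integral_const_mul, hnorm, mul_one]

variable {ψ : ℕ → α → ℝ} {ω : ℕ → ℝ} {w : α → ℝ}

theorem memLp_sum_range_mul_sq [IsFiniteMeasure μ] (hw : AEStronglyMeasurable w μ)
    (hw01 : ∀ x, 0 ≤ w x ∧ w x ≤ 1) (hdiag : ∀ᵐ x ∂μ, HasSum (fun i => ω i * ψ i x ^ 2) (w x))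
    {k : ℕ} (htail : MemLp (fun x => ∑' i : {i // k ≤ i}, ω i * ψ i x ^ 2) 2 μ) :
    MemLp (fun x => ∑ i ∈ range k, ω i * ψ i x ^ 2) 2 μ := by
  have hw2 : MemLp w 2 μ := memLp_of_nonneg_of_le_one hw hw01 2
  exact (hw2.sub htail).ae_eq (hdiag.mono fun x hx => (hx.sum_range_eq_sub_tsum_ge k).symm)

theorem integral_sq_sum_range_mul_sq_le [IsFiniteMeasure μ] (hnorm : ∀ i, ∫ x, ψ i x ^ 2 ∂μ = 1)
    (hω : Summable fun i => |ω i|) (hw : AEStronglyMeasurable w μ)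
    (hw01 : ∀ x, 0 ≤ w x ∧ w x ≤ 1) (hdiag : ∀ᵐ x ∂μ, HasSum (fun i => ω i * ψ i x ^ 2) (w x))
    {k : ℕ} {B : ℝ} (htail : MemLp (fun x => ∑' i : {i // k ≤ i}, ω i * ψ i x ^ 2) 2 μ)
    (htailB : ∫ x, (∑' i : {i // k ≤ i}, ω i * ψ i x ^ 2) ^ 2 ∂μ ≤ B ^ 2) :
    ∫ x, (∑ i ∈ range k, ω i * ψ i x ^ 2) ^ 2 ∂μ ≤ 2 * ∑' i, |ω i| + 2 * B ^ 2 := by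
  have hw2 : MemLp w 2 μ := memLp_of_nonneg_of_le_one hw hw01 2
  have hw_sq_le : ∫ x, w x ^ 2 ∂μ ≤ ∫ x, w x ∂μ :=
    integral_mono hw2.integrable_sq (hw2.integrable one_le_two) fun x => by
      nlinarith [hw01 x]
  have hw_int : ∫ x, w x ∂μ ≤ ∑' i, |ω i| := by
    rw [integral_eq_tsum_of_ae_hasSum hnorm hω hdiag]
    exact hω.of_abs.tsum_le_tsum (fun i => le_abs_self _) hω
  calc ∫ x, (∑ i ∈ range k, ω i * ψ i x ^ 2) ^ 2 ∂μ
      = ∫ x, (w x + -∑' i : {i // k ≤ i}, ω i * ψ i x ^ 2) ^ 2 ∂μ :=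
        integral_congr_ae (hdiag.mono fun x hx => by
          simp only [hx.sum_range_eq_sub_tsum_ge k, sub_eq_add_neg])
    _ ≤ 2 * ∫ x, w x ^ 2 ∂μ + 2 * ∫ x, (-∑' i : {i // k ≤ i}, ω i * ψ i x ^ 2) ^ 2 ∂μ :=
        integral_sq_add_le hw2 htail.neg
    _ ≤ 2 * ∑' i, |ω i| + 2 * B ^ 2 := by
        simp_rw [neg_sq]
        linarith

end Diagonal

theorem MeasureTheory.MeasurePreserving.integral_comp_of_aestronglyMeasurable {α β E : Type*}
    [MeasurableSpace α] [MeasurableSpace β] [NormedAddCommGroup E] [NormedSpace ℝ E]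
    {μ : Measure α} {ν : Measure β} {f : α → β} (hf : MeasurePreserving f μ ν) {g : β → E}
    (hg : AEStronglyMeasurable g ν) :
    ∫ x, g (f x) ∂μ = ∫ y, g y ∂ν := by
  rw [← hf.map_eq] at hg ⊢
  exact (integral_map hf.aemeasurable hg).symm

section IID

variable {α ι : Type*} [MeasurableSpace α] [Fintype ι] {μ : Measure α} [IsProbabilityMeasure μ]

theorem measurePreserving_pi_pair {u v : ι} (huv : u ≠ v) :
    MeasurePreserving (fun ξ : ι → α => (ξ u, ξ v)) (Measure.pi fun _ => μ) (μ.prod μ) := by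
  have hindep : IndepFun (fun ξ : ι → α => ξ u) (fun ξ => ξ v) (Measure.pi fun _ => μ) :=
    (iIndepFun_pi (X := fun _ => id) fun _ => aemeasurable_id).indepFun huv
  refine ⟨(measurable_pi_apply u).prodMk (measurable_pi_apply v), ?_⟩
  rw [hindep.map_prod_eq_prod_map_map (measurable_pi_apply u).aemeasurable
    (measurable_pi_apply v).aemeasurable, (measurePreserving_eval _ u).map_eq,
    (measurePreserving_eval _ v).map_eq]

theorem integral_sum_sum_ite_pi [DecidableEq ι] {d : α → ℝ} {g : α → α → ℝ}
    (hd : Integrable d μ) (hg : Integrable (fun p => g p.1 p.2) (μ.prod μ)) :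
    ∫ ξ, ∑ u, ∑ v, (if u = v then d (ξ u) else g (ξ u) (ξ v)) ∂Measure.pi (fun _ : ι => μ) =
      Fintype.card ι * ∫ x, d x ∂μ +
        ((Fintype.card ι : ℝ) ^ 2 - Fintype.card ι) * ∫ p, g p.1 p.2 ∂μ.prod μ := by
  have hterm : ∀ u v : ι,
      Integrable (fun ξ : ι → α => if u = v then d (ξ u) else g (ξ u) (ξ v))
        (Measure.pi fun _ => μ) ∧
      ∫ ξ, (if u = v then d (ξ u) else g (ξ u) (ξ v)) ∂Measure.pi (fun _ => μ) =
        if u = v then ∫ x, d x ∂μ else ∫ p, g p.1 p.2 ∂μ.prod μ := by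
    intro u v
    by_cases huv : u = v
    · subst huv
      simp only [↓reduceIte]
      have hu := measurePreserving_eval (fun _ : ι => μ) u
      exact ⟨(hu.integrable_comp hd.aestronglyMeasurable).2 hd,
        hu.integral_comp_of_aestronglyMeasurable hd.aestronglyMeasurable⟩
    · simp only [if_neg huv]
      have huv' := measurePreserving_pi_pair (μ := μ) huv
      exact ⟨(huv'.integrable_comp hg.aestronglyMeasurable).2 hg,
        huv'.integral_comp_of_aestronglyMeasurable (g := fun p => g p.1 p.2)
          hg.aestronglyMeasurable⟩
  rw [integral_finsetSum _ fun u _ => integrable_finsetSum _ fun v _ => (hterm u v).1]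
  simp_rw [integral_finsetSum _ fun v _ => (hterm _ v).1, (hterm _ _).2]
  set a := ∫ x, d x ∂μ
  set b := ∫ p, g p.1 p.2 ∂μ.prod μ
  have hsplit : ∀ u v : ι, (if u = v then a else b) = b + if u = v then a - b else 0 :=
    fun u v => by split_ifs <;> ring
  simp only [hsplit, sum_add_distrib, sum_ite_eq, mem_univ, if_true, sum_const, card_univ,
    nsmul_eq_mul]
  ring

end IID

/-- Indices start at `0`: `range k` holds the paper's first `k` terms, and `{i // k ≤ i}` the
paper's tail `i ≥ k + 1`. -/
theorem expected_frobenius_low_rank_approx_general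
    (n k : ℕ)
    (φ : ℕ → ℝ → ℝ) (ω : ℕ → ℝ) (W : ℝ → ℝ → ℝ) (B : ℝ)
    (hφmem : ∀ i, MemLp (φ i) 2 unifMeasure)
    (horth : ∀ i j, (∫ x in Set.Icc (0:ℝ) 1, φ i x * φ j x) =
      if i = j then (1:ℝ) else 0)
    (hω1 : Summable fun i => |ω i|)
    (hω2 : Summable fun i => (ω i) ^ 2)
    (hWmeas : Measurable (Function.uncurry W))
    (hW01 : ∀ x y, 0 ≤ W x y ∧ W x y ≤ 1)
    (hL2conv : Filter.Tendsto
      (fun m => ∫ x in Set.Icc (0:ℝ) 1, ∫ y in Set.Icc (0:ℝ) 1,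
        (W x y - ∑ i ∈ Finset.range m, ω i * φ i x * φ i y) ^ 2)
      Filter.atTop (nhds 0))
    (hdiag : ∀ᵐ x ∂unifMeasure, HasSum (fun i => ω i * (φ i x) ^ 2) (W x x))
    (htail : ∀ k' : ℕ,
      MemLp (fun x => ∑' i : {i : ℕ // k' ≤ i}, ω i * (φ i x) ^ 2) 2 unifMeasure ∧
      (∫ x in Set.Icc (0:ℝ) 1, (∑' i : {i : ℕ // k' ≤ i}, ω i * (φ i x) ^ 2) ^ 2) ≤ B ^ 2) :
    (∫ ξ : Fin n → ℝ,
        (∑ u, ∑ v,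
          ((if u = v then (0:ℝ) else W (ξ u) (ξ v))
            - ∑ i ∈ Finset.range k, ω i * φ i (ξ u) * φ i (ξ v)) ^ 2)
        ∂(Measure.pi fun _ : Fin n => unifMeasure))
      ≤ 2 * (n : ℝ) ^ 2 * (∑' i : {i : ℕ // k ≤ i}, (ω i) ^ 2)
        + n * (2 * (∑' i, |ω i|) + 2 * B ^ 2) := by
  have hφ : L2Orthonormal unifMeasure φ := ⟨hφmem, horth⟩
  have hW : MemLp (fun p : ℝ × ℝ => W p.1 p.2) 2 (unifMeasure.prod unifMeasure) :=
    memLp_of_nonneg_of_le_one hWmeas.aestronglyMeasurable (fun p => hW01 p.1 p.2) 2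
  have hoffL2 := hW.sub (hφ.memLp_sum_kernel ω (range k))
  have hoff := hφ.integral_sq_sub_sum_range_kernel_le hW hω2 hL2conv k
  have hw : AEStronglyMeasurable (fun x => W x x) unifMeasure :=
    (hWmeas.comp (measurable_id.prodMk measurable_id)).aestronglyMeasurable
  have hdiagL2 := memLp_sum_range_mul_sq hw (fun x => hW01 x x) hdiag (htail k).1
  have hdiagB := integral_sq_sum_range_mul_sq_le hφ.integral_sq
    hω1 hw (fun x => hW01 x x) hdiag (htail k).1 (htail k).2
  have hentry : ∀ (ξ : Fin n → ℝ) (u v : Fin n),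
      ((if u = v then (0:ℝ) else W (ξ u) (ξ v)) - ∑ i ∈ range k, ω i * φ i (ξ u) * φ i (ξ v)) ^ 2 =
        if u = v then (∑ i ∈ range k, ω i * φ i (ξ u) ^ 2) ^ 2
        else (W (ξ u) (ξ v) - ∑ i ∈ range k, ω i * φ i (ξ u) * φ i (ξ v)) ^ 2 := by
    intro ξ u v
    split_ifs with huv
    · simp only [huv, zero_sub, neg_sq, mul_assoc, ← sq]
    · rfl
  simp_rw [hentry]
  rw [integral_sum_sum_ite_pi (g := fun x y =>
      (W x y - ∑ i ∈ range k, ω i * φ i x * φ i y) ^ 2) hdiagL2.integrable_sq hoffL2.integrable_sq,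
    Fintype.card_fin]
  have hn : (0 : ℝ) ≤ n := n.cast_nonneg
  have hoff_nonneg : 0 ≤ ∫ p, (W p.1 p.2 - ∑ i ∈ range k, ω i * φ i p.1 * φ i p.2) ^ 2
      ∂unifMeasure.prod unifMeasure := integral_nonneg fun _ => sq_nonneg _
  nlinarith [mul_le_mul_of_nonneg_left hdiagB hn,
    mul_le_mul_of_nonneg_left hoff (sq_nonneg (n : ℝ)), mul_nonneg hn hoff_nonneg]

/-- Let `(φ i)_{i ∈ ℕ}` be an orthonormal family in `L²([0,1])`
(the family `(φᵢ)_{i ≥ 1}` of the paper, reindexed from `0`), `(ω i)` reals with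
`∑ |ω i| < ∞` and `∑ (ω i)² < ∞`, and `W : [0,1]² → ℝ` measurable with `0 ≤ W ≤ 1`, such that:
(i) the partial sums `∑_{i<m} ω i φ i x φ i y` converge to `W` in `L²([0,1]²)`;
(ii) for a.e. `x`, `∑ i, ω i (φ i x)²` converges to `W x x`;
(iii) there is `B ≥ 0` so that for every `k'` the tail `x ↦ ∑_{i ≥ k'} ω i (φ i x)²`
is in `L²([0,1])` with norm at most `B`.
Let `ξ₁, …, ξₙ` be i.i.d. uniform on `[0,1]` (modeled by the product measure),
`M` the random matrix with `M u v = W (ξ u) (ξ v)` off the diagonal and `0` on it, and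
`N u v = ∑_{i<k} ω i φ i (ξ u) φ i (ξ v)` (the first `k` terms). Then
`E ‖M - N‖_F² ≤ 2 n² ∑_{i ≥ k} (ω i)² + n (2 ∑ᵢ |ω i| + 2 B²)`. -/
theorem expected_frobenius_low_rank_approx
    (n k : ℕ)
    (φ : ℕ → ℝ → ℝ) (ω : ℕ → ℝ) (W : ℝ → ℝ → ℝ) (B : ℝ)
    (hφmem : ∀ i, MemLp (φ i) 2 unifMeasure)
    (horth : ∀ i j, (∫ x in Set.Icc (0:ℝ) 1, φ i x * φ j x) =
      if i = j then (1:ℝ) else 0)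
    (hω1 : Summable fun i => |ω i|)
    (hω2 : Summable fun i => (ω i) ^ 2)
    (hWmeas : Measurable (Function.uncurry W))
    (hW01 : ∀ x y, 0 ≤ W x y ∧ W x y ≤ 1)
    (hL2conv : Filter.Tendsto
      (fun m => ∫ x in Set.Icc (0:ℝ) 1, ∫ y in Set.Icc (0:ℝ) 1,
        (W x y - ∑ i ∈ Finset.range m, ω i * φ i x * φ i y) ^ 2)
      Filter.atTop (nhds 0))
    (hdiag : ∀ᵐ x ∂unifMeasure, HasSum (fun i => ω i * (φ i x) ^ 2) (W x x))
    (hB : 0 ≤ B)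
    (htail : ∀ k' : ℕ,
      MemLp (fun x => ∑' i : {i : ℕ // k' ≤ i}, ω i * (φ i x) ^ 2) 2 unifMeasure ∧
      (∫ x in Set.Icc (0:ℝ) 1, (∑' i : {i : ℕ // k' ≤ i}, ω i * (φ i x) ^ 2) ^ 2) ≤ B ^ 2) :
    (∫ ξ : Fin n → ℝ,
        (∑ u, ∑ v,
          ((if u = v then (0:ℝ) else W (ξ u) (ξ v))
            - ∑ i ∈ Finset.range k, ω i * φ i (ξ u) * φ i (ξ v)) ^ 2)
        ∂(Measure.pi fun _ : Fin n => unifMeasure))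
      ≤ 2 * (n : ℝ) ^ 2 * (∑' i : {i : ℕ // k ≤ i}, (ω i) ^ 2)
        + n * (2 * (∑' i, |ω i|) + 2 * B ^ 2) :=
  expected_frobenius_low_rank_approx_general n k φ ω W B hφmem horth hω1 hω2 hWmeas hW01 hL2conv
    hdiag htail
end

section
/- There exists a constant λ₂ > 1 such that the following holds. Let n ≥ 2 and let m ≥ 1 be an integer with m ≤ n / (4 log n). Let ξ₁, …, ξₙ be i.i.d. uniform random variables on [0,1], let I_j = [(j−1)/m, j/m) for j = 1, …, m, and let s_j = #{k : ξ_k ∈ I_j}. Then with λ₁ = 1 − 1/√2, P( λ₁ n / m ≤ s_j ≤ λ₂ n / m for all j = 1, …, m ) > 0. -/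
open MeasureTheory Finset

instance inst_s8 : IsProbabilityMeasure unifMeasure := ⟨by simp [unifMeasure]⟩

lemma unifMeasure_Ico_pos {a b : ℝ} (ha : 0 ≤ a) (hab : a < b) (hb : b ≤ 1) :
    0 < unifMeasure (Set.Ico a b) := by
  rw [unifMeasure, Measure.restrict_apply measurableSet_Ico,
    Set.inter_eq_left.mpr (Set.Ico_subset_Icc_self.trans (Set.Icc_subset_Icc ha hb)),
    Real.volume_Ico, ENNReal.ofReal_pos, sub_pos]
  exact hab

lemma unifMeasure_Ico_div_pos {m a : ℕ} (ha : a < m) :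
    0 < unifMeasure (Set.Ico ((a : ℝ) / m) (((a : ℝ) + 1) / m)) := by
  have hm : (0 : ℝ) < m := by exact_mod_cast (a.zero_le.trans_lt ha)
  refine unifMeasure_Ico_pos (by positivity) (by gcongr; linarith) ?_
  rw [div_le_one hm]
  exact_mod_cast ha

lemma floor_mul_eq_of_mem_Ico_div {m a : ℕ} {x : ℝ} (hm : 0 < m)
    (hx : x ∈ Set.Ico ((a : ℝ) / m) (((a : ℝ) + 1) / m)) : ⌊x * m⌋ = a := by
  have hm' : (0 : ℝ) < m := by exact_mod_cast hm
  rw [Int.floor_eq_iff]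
  push_cast
  exact ⟨(div_le_iff₀ hm').1 hx.1, (lt_div_iff₀ hm').1 hx.2⟩

lemma card_filter_mem_Ico_div_eq {ι : Type*} (s : Finset ι) {m : ℕ} (hm : 0 < m)
    (b : ι → ℕ) (ξ : ι → ℝ) (hξ : ∀ k, ξ k ∈ Set.Ico ((b k : ℝ) / m) (((b k : ℝ) + 1) / m))
    (j : ℕ) :
    #{k ∈ s | ξ k ∈ Set.Ico ((j : ℝ) / m) (((j : ℝ) + 1) / m)} = #{k ∈ s | b k = j} := by
  congr 1
  refine filter_congr fun k _ => ⟨fun hj => ?_, fun hj => hj ▸ hξ k⟩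
  exact_mod_cast (floor_mul_eq_of_mem_Ico_div hm (hξ k)).symm.trans
    (floor_mul_eq_of_mem_Ico_div hm hj)

lemma card_filter_val_mod_eq (n : ℕ) {m j : ℕ} (hj : j < m) :
    #{k : Fin n | k.val % m = j} = n / m + if j < n % m then 1 else 0 := by
  have hm : 0 < m := j.zero_le.trans_lt hj
  have hcount := Nat.count_modEq_card n hm j
  rw [Nat.mod_eq_of_lt hj] at hcount
  rw [← hcount, Nat.count_eq_card_filter_range, card_filter, card_filter,
    Fin.sum_univ_eq_sum_range (fun k => if k % m = j then 1 else 0)]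
  simp only [Nat.ModEq, Nat.mod_eq_of_lt hj]

lemma card_filter_val_mod_mem_Icc (n : ℕ) {m j : ℕ} (hj : j < m) :
    (#{k : Fin n | k.val % m = j} : ℝ) ∈ Set.Icc ((n : ℝ) / m - 1) (n / m + 1) := by
  have hfloor : ((n / m : ℕ) : ℝ) = ⌊(n : ℝ) / m⌋₊ := by rw [Nat.floor_div_eq_div]
  have hlo := Nat.lt_floor_add_one ((n : ℝ) / m)
  have hhi := Nat.floor_le (by positivity : (0 : ℝ) ≤ n / m)
  rw [card_filter_val_mod_eq n hj]
  split_ifs <;> push_cast <;> constructor <;> linarith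

lemma two_le_div_of_le_div_four_mul_log {x y : ℝ} (hx : 2 ≤ x) (hy : 0 < y)
    (hyx : y ≤ x / (4 * Real.log x)) : 2 ≤ x / y := by
  have hlog : 0.6931471803 < Real.log x :=
    Real.log_two_gt_d9.trans_le (Real.log_le_log two_pos hx)
  rw [le_div_iff₀ (by linarith), mul_comm] at hyx
  rw [le_div_iff₀ hy]
  nlinarith

/-- There is a constant `λ₂ > 1` such that for all `n ≥ 2` and integers
`1 ≤ m` with `m ≤ n / (4 log n)`: if `ξ₁, …, ξₙ` are i.i.d. uniform on `[0,1]`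
(modeled by the product measure), `I_j = [j/m, (j+1)/m)` for `j = 0, …, m-1`, and
`s_j ξ` is the number of `k` with `ξ k ∈ I_j`, then with `λ₁ = 1 - 1/√2`, the event
`{∀ j, λ₁ n / m ≤ s_j ≤ λ₂ n / m}` has positive probability. -/
theorem bins_two_sided_positive_probability :
    ∃ lam2 : ℝ, 1 < lam2 ∧
      ∀ n m : ℕ, 2 ≤ n → 1 ≤ m → (m : ℝ) ≤ (n : ℝ) / (4 * Real.log n) →
        0 < (Measure.pi fun _ : Fin n => unifMeasure)
          {ξ : Fin n → ℝ | ∀ j : Fin m,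
            (1 - 1 / Real.sqrt 2) * n / m ≤
              (((Finset.univ.filter fun k : Fin n =>
                ξ k ∈ Set.Ico ((j : ℝ) / m) (((j : ℝ) + 1) / m)).card : ℕ) : ℝ) ∧
            (((Finset.univ.filter fun k : Fin n =>
                ξ k ∈ Set.Ico ((j : ℝ) / m) (((j : ℝ) + 1) / m)).card : ℕ) : ℝ)
              ≤ lam2 * n / m} := by
  refine ⟨2, one_lt_two, fun n m hn hm hmn => ?_⟩
  have hmR : (0 : ℝ) < m := by exact_mod_cast hm
  have hu : 2 ≤ (n : ℝ) / m :=
    two_le_div_of_le_div_four_mul_log (by exact_mod_cast hn) hmR hmn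
  have hsqrt : Real.sqrt 2 ≤ (n : ℝ) / m := by
    nlinarith [Real.sq_sqrt (zero_le_two : (0 : ℝ) ≤ 2), Real.sqrt_nonneg 2]
  have hlam1 : (1 - 1 / Real.sqrt 2) * ((n : ℝ) / m) ≤ n / m - 1 := by
    have : 1 ≤ (n : ℝ) / m / Real.sqrt 2 := by
      rwa [one_le_div (by positivity)]
    rw [one_sub_mul, one_div_mul_eq_div]
    linarith
  have hbox : 0 < (Measure.pi fun _ : Fin n => unifMeasure)
      (Set.univ.pi fun k => Set.Ico (((k.val % m : ℕ) : ℝ) / m) (((k.val % m : ℕ) + 1) / m)) := by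
    rw [Measure.pi_pi, CanonicallyOrderedAdd.prod_pos]
    exact fun k _ => unifMeasure_Ico_div_pos (Nat.mod_lt _ hm)
  refine hbox.trans_le (measure_mono fun ξ hξ j => ?_)
  rw [Set.mem_univ_pi] at hξ
  have hcard := card_filter_val_mod_mem_Icc n j.isLt
  rw [← card_filter_mem_Ico_div_eq univ hm _ ξ hξ] at hcard
  rw [mul_div_assoc, mul_div_assoc]
  exact ⟨hlam1.trans hcard.1, by linarith [hcard.2]⟩
end

section
/- Let U, U′, W, W′ be real m×k matrices each with orthonormal columns, i.e. UᵀU = U′ᵀU′ = WᵀW = W′ᵀW′ = I_k. Then |tr( U′ᵀ U Wᵀ W′ )| ≤ 2k − (1/2)‖U Uᵀ − U′ U′ᵀ‖_F² − (1/2)‖W Wᵀ − W′ W′ᵀ‖_F². -/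
open Matrix

lemma sum_sq_eq_trace {n : ℕ} (M : Matrix (Fin n) (Fin n) ℝ) :
    ∑ a, ∑ b, (M a b) ^ 2 = Matrix.trace (M * Mᵀ) := by
  simp [Matrix.trace, Matrix.diag, Matrix.mul_apply, Matrix.transpose_apply, sq]

lemma norm_diff_proj {m k : ℕ} (X X' : Matrix (Fin m) (Fin k) ℝ)
    (h : Xᵀ * X = 1) (h' : X'ᵀ * X' = 1) :
    ∑ a, ∑ b, ((X * Xᵀ - X' * X'ᵀ) a b) ^ 2
      = 2 * k - 2 * ∑ i, ∑ j, ((X'ᵀ * X) i j) ^ 2 := by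
  have hsym : (X * Xᵀ - X' * X'ᵀ)ᵀ = X * Xᵀ - X' * X'ᵀ := by
    simp [Matrix.transpose_sub, Matrix.transpose_mul]
  rw [sum_sq_eq_trace, hsym]
  have hexp : (X * Xᵀ - X' * X'ᵀ) * (X * Xᵀ - X' * X'ᵀ)
      = X * Xᵀ * (X * Xᵀ) - X * Xᵀ * (X' * X'ᵀ) - X' * X'ᵀ * (X * Xᵀ)
        + X' * X'ᵀ * (X' * X'ᵀ) := by
    noncomm_ring
  rw [hexp, Matrix.trace_add, Matrix.trace_sub, Matrix.trace_sub]
  have hPP : Matrix.trace (X * Xᵀ * (X * Xᵀ)) = (k : ℝ) := by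
    have : X * Xᵀ * (X * Xᵀ) = X * Xᵀ := by
      calc X * Xᵀ * (X * Xᵀ) = X * (Xᵀ * X) * Xᵀ := by simp [Matrix.mul_assoc]
        _ = X * Xᵀ := by rw [h, Matrix.mul_one]
    rw [this, Matrix.trace_mul_comm, h, Matrix.trace_one]
    simp
  have hQQ : Matrix.trace (X' * X'ᵀ * (X' * X'ᵀ)) = (k : ℝ) := by
    have : X' * X'ᵀ * (X' * X'ᵀ) = X' * X'ᵀ := by
      calc X' * X'ᵀ * (X' * X'ᵀ) = X' * (X'ᵀ * X') * X'ᵀ := by simp [Matrix.mul_assoc]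
        _ = X' * X'ᵀ := by rw [h', Matrix.mul_one]
    rw [this, Matrix.trace_mul_comm, h', Matrix.trace_one]
    simp
  have hPQ : Matrix.trace (X * Xᵀ * (X' * X'ᵀ)) = ∑ i, ∑ j, ((X'ᵀ * X) i j) ^ 2 := by
    have h1 : X * Xᵀ * (X' * X'ᵀ) = (X * (Xᵀ * X')) * X'ᵀ := by simp [Matrix.mul_assoc]
    have h2 : X'ᵀ * (X * (Xᵀ * X')) = (X'ᵀ * X) * (X'ᵀ * X)ᵀ := by
      rw [Matrix.transpose_mul, Matrix.transpose_transpose]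
      simp [Matrix.mul_assoc]
    rw [h1, Matrix.trace_mul_comm, h2, ← sum_sq_eq_trace]
  have hQP : Matrix.trace (X' * X'ᵀ * (X * Xᵀ)) = ∑ i, ∑ j, ((X'ᵀ * X) i j) ^ 2 := by
    rw [Matrix.trace_mul_comm, hPQ]
  rw [hPP, hQQ, hPQ, hQP]
  ring

/-- For real `m × k` matrices `U, U', W, W'` with orthonormal columns,
`|tr(U'ᵀ U Wᵀ W')| ≤ 2k - (1/2)‖U Uᵀ - U' U'ᵀ‖_F² - (1/2)‖W Wᵀ - W' W'ᵀ‖_F²`. -/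
theorem trace_cross_term_bound
    (m k : ℕ)
    (U U' W W' : Matrix (Fin m) (Fin k) ℝ)
    (hU : Uᵀ * U = 1) (hU' : U'ᵀ * U' = 1)
    (hW : Wᵀ * W = 1) (hW' : W'ᵀ * W' = 1) :
    |Matrix.trace (U'ᵀ * U * Wᵀ * W')|
      ≤ 2 * k - (1 / 2) * (∑ a, ∑ b, ((U * Uᵀ - U' * U'ᵀ) a b) ^ 2)
        - (1 / 2) * (∑ a, ∑ b, ((W * Wᵀ - W' * W'ᵀ) a b) ^ 2) := by
  rw [norm_diff_proj U U' hU hU', norm_diff_proj W W' hW hW']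
  have hWB : ∑ i, ∑ j, ((Wᵀ * W') i j) ^ 2 = ∑ i, ∑ j, ((W'ᵀ * W) i j) ^ 2 := by
    have h0 : Wᵀ * W' = (W'ᵀ * W)ᵀ := by
      rw [Matrix.transpose_mul, Matrix.transpose_transpose]
    rw [h0, Finset.sum_comm]
    simp [Matrix.transpose_apply]
  have hbound : |Matrix.trace (U'ᵀ * U * Wᵀ * W')|
      ≤ (∑ i, ∑ j, ((U'ᵀ * U) i j) ^ 2) + (∑ i, ∑ j, ((Wᵀ * W') i j) ^ 2) := by
    have htr : Matrix.trace (U'ᵀ * U * Wᵀ * W')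
        = ∑ i, ∑ j, (U'ᵀ * U) i j * (Wᵀ * W') j i := by
      have h0 : U'ᵀ * U * Wᵀ * W' = (U'ᵀ * U) * (Wᵀ * W') := by
        simp [Matrix.mul_assoc]
      rw [h0]
      simp [Matrix.trace, Matrix.diag, Matrix.mul_apply]
    rw [htr]
    calc |∑ i, ∑ j, (U'ᵀ * U) i j * (Wᵀ * W') j i|
        ≤ ∑ i, ∑ j, |(U'ᵀ * U) i j * (Wᵀ * W') j i| := by
          refine (Finset.abs_sum_le_sum_abs _ _).trans ?_
          exact Finset.sum_le_sum fun i _ => Finset.abs_sum_le_sum_abs _ _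
      _ ≤ ∑ i, ∑ j, (((U'ᵀ * U) i j) ^ 2 + ((Wᵀ * W') j i) ^ 2) := by
          refine Finset.sum_le_sum fun i _ => Finset.sum_le_sum fun j _ => ?_
          rw [abs_mul]
          nlinarith [abs_nonneg ((U'ᵀ * U) i j), abs_nonneg ((Wᵀ * W') j i),
            sq_abs ((U'ᵀ * U) i j), sq_abs ((Wᵀ * W') j i),
            sq_nonneg (|(U'ᵀ * U) i j| - |(Wᵀ * W') j i|)]
      _ = (∑ i, ∑ j, ((U'ᵀ * U) i j) ^ 2) + (∑ i, ∑ j, ((Wᵀ * W') j i) ^ 2) := by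
          simp [Finset.sum_add_distrib]
      _ = (∑ i, ∑ j, ((U'ᵀ * U) i j) ^ 2) + (∑ i, ∑ j, ((Wᵀ * W') i j) ^ 2) := by
          rw [Finset.sum_comm (s := Finset.univ) (t := Finset.univ)
            (f := fun i j => ((Wᵀ * W') j i) ^ 2)]
  linarith [hbound, hWB.le, hWB.ge]
end

section
/- Let U, U′, W, W′ be real m×k matrices each with orthonormal columns, i.e. UᵀU = U′ᵀU′ = WᵀW = W′ᵀW′ = I_k. Then ‖U Wᵀ − U′ W′ᵀ‖_F² ≥ ‖U Uᵀ − U′ U′ᵀ‖_F² + ‖W Wᵀ − W′ W′ᵀ‖_F² − 2k. -/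
open Matrix

lemma frob_key (m k : ℕ) (X X' Y Y' : Matrix (Fin m) (Fin k) ℝ)
    (hX : Xᵀ * X = 1) (hX' : X'ᵀ * X' = 1)
    (hY : Yᵀ * Y = 1) (hY' : Y'ᵀ * Y' = 1) :
    ∑ a, ∑ b, ((X * Yᵀ - X' * Y'ᵀ) a b) ^ 2
      = 2 * k - 2 * ∑ i, ∑ j, (Xᵀ * X') i j * (Yᵀ * Y') i j := by
  set D := X * Yᵀ - X' * Y'ᵀ with hD
  have h1 : ∑ a, ∑ b, (D a b) ^ 2 = trace (D * Dᵀ) := by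
    simp [Matrix.trace, Matrix.mul_apply, Matrix.diag, sq]
  rw [h1, hD]
  have hexp : (X * Yᵀ - X' * Y'ᵀ) * (X * Yᵀ - X' * Y'ᵀ)ᵀ
      = X * (Yᵀ * Y) * Xᵀ - X * (Yᵀ * Y') * X'ᵀ
        - X' * (Y'ᵀ * Y) * Xᵀ + X' * (Y'ᵀ * Y') * X'ᵀ := by
    simp only [transpose_sub, transpose_mul, transpose_transpose, sub_mul, mul_sub,
      Matrix.mul_assoc]
    abel
  rw [hexp, hY, hY', Matrix.mul_one, Matrix.mul_one]
  have t1 : trace (X * Xᵀ) = (k : ℝ) := by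
    rw [Matrix.trace_mul_comm, hX]
    simp [Matrix.trace_one]
  have t2 : trace (X' * X'ᵀ) = (k : ℝ) := by
    rw [Matrix.trace_mul_comm, hX']
    simp [Matrix.trace_one]
  have t3 : trace (X * (Yᵀ * Y') * X'ᵀ) = ∑ i, ∑ j, (Xᵀ * X') i j * (Yᵀ * Y') i j := by
    rw [Matrix.trace_mul_comm, ← Matrix.mul_assoc]
    simp only [Matrix.trace, Matrix.diag, Matrix.mul_apply]
    rw [Finset.sum_comm]
    apply Finset.sum_congr rfl; intro i _
    apply Finset.sum_congr rfl; intro j _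
    congr 1
    exact Finset.sum_congr rfl fun l _ => by
      simp only [Matrix.transpose_apply]; ring
  have t4 : trace (X' * (Y'ᵀ * Y) * Xᵀ) = ∑ i, ∑ j, (Xᵀ * X') i j * (Yᵀ * Y') i j := by
    rw [Matrix.trace_mul_comm, ← Matrix.mul_assoc]
    simp only [Matrix.trace, Matrix.diag, Matrix.mul_apply]
    apply Finset.sum_congr rfl; intro i _
    apply Finset.sum_congr rfl; intro j _
    congr 1
    exact Finset.sum_congr rfl fun l _ => by
      simp only [Matrix.transpose_apply]; ring
  rw [trace_add, trace_sub, trace_sub, t1, t2, t3, t4]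
  ring

/-- For real `m × k` matrices `U, U', W, W'` with orthonormal columns,
`‖U Wᵀ - U' W'ᵀ‖_F² ≥ ‖U Uᵀ - U' U'ᵀ‖_F² + ‖W Wᵀ - W' W'ᵀ‖_F² - 2k`. -/
theorem frobenius_sq_cross_lower_bound
    (m k : ℕ)
    (U U' W W' : Matrix (Fin m) (Fin k) ℝ)
    (hU : Uᵀ * U = 1) (hU' : U'ᵀ * U' = 1)
    (hW : Wᵀ * W = 1) (hW' : W'ᵀ * W' = 1) :
    (∑ a, ∑ b, ((U * Uᵀ - U' * U'ᵀ) a b) ^ 2)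
        + (∑ a, ∑ b, ((W * Wᵀ - W' * W'ᵀ) a b) ^ 2) - 2 * k
      ≤ ∑ a, ∑ b, ((U * Wᵀ - U' * W'ᵀ) a b) ^ 2 := by
  have e1 := frob_key m k U U' U U' hU hU' hU hU'
  have e2 := frob_key m k W W' W W' hW hW' hW hW'
  have e3 := frob_key m k U U' W W' hU hU' hW hW'
  set A := Uᵀ * U' with hA
  set B := Wᵀ * W' with hB
  have hineq : ∑ i, ∑ j, A i j * B i j
      ≤ (∑ i, ∑ j, A i j * A i j) + ∑ i, ∑ j, B i j * B i j := by
    rw [← Finset.sum_add_distrib]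
    apply Finset.sum_le_sum; intro i _
    rw [← Finset.sum_add_distrib]
    apply Finset.sum_le_sum; intro j _
    nlinarith [sq_nonneg (A i j - B i j), sq_nonneg (A i j), sq_nonneg (B i j)]
  rw [e1, e2, e3]
  linarith
end

section
/- There exist constants c > 0 and c′ > 0 such that for all integers k ≥ 1 and m₁ ≥ 4k, there exists a finite set 𝒰 of real m₁×k matrices with the following properties: (1) every U ∈ 𝒰 satisfies Uᵀ U = I_k; (2) for all distinct U, U′ ∈ 𝒰, ‖U Uᵀ − U′ U′ᵀ‖_F² ≥ c k; and (3) log |𝒰| ≥ c′ k (m₁ − k). -/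
open Matrix Finset

/-- Squared Frobenius norm of a matrix. -/
def frobSq {α β : Type*} [Fintype α] [Fintype β] (A : Matrix α β ℝ) : ℝ :=
  ∑ i, ∑ j, (A i j) ^ 2

/-!
For `X : Matrix n k ℝ` of operator norm at most `1 / 2`, the columns of
`[1; X] (1 + XᵀX)^(-1/2)` form an orthonormal frame of the graph of `X`, and the Frobenius
distance between the projections onto two such graphs dominates `‖X - Y‖_F`. So it suffices to
find many matrices of operator norm `≤ 1 / 2` that are pairwise `≳ √k` apart in Frobenius norm.
Take `X = S / (24 √n)` with `S` a `±1` matrix: by Hoeffding's inequality and a union bound over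
`1/4`-nets of the two unit balls, at least half of the `2^(nk)` sign matrices have `‖S‖ ≤ 12 √n`,
and among these the greedy Gilbert–Varshamov argument finds `exp (nk / 100)` matrices with pairwise
Hamming distances above `nk / 100`, i.e. `‖X - Y‖_F² > k / 14400`.
-/

open MeasureTheory Metric Module Real
open scoped NNReal ENNReal RealInnerProductSpace

section Frobenius

variable {m n l : Type*} [Fintype m] [Fintype n] [Fintype l]

lemma frobSq_nonneg (A : Matrix m n ℝ) : 0 ≤ frobSq A := by
  unfold frobSq; positivity

lemma frobSq_zero : frobSq (0 : Matrix m n ℝ) = 0 := by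
  simp [frobSq]

lemma frobSq_transpose (A : Matrix m n ℝ) : frobSq Aᵀ = frobSq A :=
  Finset.sum_comm

lemma frobSq_neg (A : Matrix m n ℝ) : frobSq (-A) = frobSq A := by
  simp [frobSq]

lemma frobSq_smul (c : ℝ) (A : Matrix m n ℝ) : frobSq (c • A) = c ^ 2 * frobSq A := by
  simp only [frobSq, Matrix.smul_apply, smul_eq_mul, mul_pow, mul_sum]

lemma frobSq_eq_trace (A : Matrix m n ℝ) : frobSq A = (Aᵀ * A).trace := by
  rw [← frobSq_transpose]
  simp [frobSq, trace, mul_apply, sq]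

lemma frobSq_eq_trace_mul_transpose (A : Matrix m n ℝ) : frobSq A = (A * Aᵀ).trace := by
  rw [← frobSq_transpose, frobSq_eq_trace, transpose_transpose]

lemma frobSq_fromRows (A : Matrix m l ℝ) (B : Matrix n l ℝ) :
    frobSq (fromRows A B) = frobSq A + frobSq B :=
  Fintype.sum_sum_type _

lemma frobSq_reindex {m' n' : Type*} [Fintype m'] [Fintype n'] (e₁ : m ≃ m') (e₂ : n ≃ n')
    (A : Matrix m n ℝ) : frobSq (reindex e₁ e₂ A) = frobSq A := by
  simp only [frobSq, reindex_apply, submatrix_apply]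
  rw [← e₁.symm.sum_comp]
  exact sum_congr rfl fun i _ => e₂.symm.sum_comp fun j => A (e₁.symm i) j ^ 2

lemma frobSq_add_le (A B : Matrix m n ℝ) {t : ℝ} (ht : 0 < t) :
    frobSq (A + B) ≤ (1 + t) * frobSq A + (1 + t⁻¹) * frobSq B := by
  simp only [frobSq, mul_sum, ← sum_add_distrib]
  gcongr with i _ j _
  rw [Matrix.add_apply, ← sub_nonneg]
  have key : (1 + t) * A i j ^ 2 + (1 + t⁻¹) * B i j ^ 2 - (A i j + B i j) ^ 2
      = t⁻¹ * (t * A i j - B i j) ^ 2 := by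
    field_simp; ring
  rw [key]; positivity

open scoped Matrix.Norms.L2Operator

lemma frobSq_eq_sum_norm_sq (A : Matrix m n ℝ) :
    frobSq A = ∑ j, ‖(EuclideanSpace.equiv m ℝ).symm (Aᵀ j)‖ ^ 2 := by
  rw [← frobSq_transpose]
  simp [frobSq, EuclideanSpace.norm_sq_eq]

lemma frobSq_mul_le [DecidableEq n] (A : Matrix m n ℝ) (B : Matrix n l ℝ) :
    frobSq (A * B) ≤ ‖A‖ ^ 2 * frobSq B := by
  rw [frobSq_eq_sum_norm_sq, frobSq_eq_sum_norm_sq, mul_sum]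
  gcongr with j
  calc ‖(EuclideanSpace.equiv m ℝ).symm ((A * B)ᵀ j)‖ ^ 2
      = ‖(EuclideanSpace.equiv m ℝ).symm (A *ᵥ (EuclideanSpace.equiv n ℝ).symm (Bᵀ j))‖ ^ 2 := rfl
    _ ≤ (‖A‖ * ‖(EuclideanSpace.equiv n ℝ).symm (Bᵀ j)‖) ^ 2 := by
      gcongr; exact l2_opNorm_mulVec A _
    _ = _ := mul_pow _ _ _

end Frobenius

section GraphFrame

open scoped MatrixOrder

variable {k n : Type*} [Fintype k] [DecidableEq k] [Fintype n]

lemma transpose_fromRows_one_mul_self (X : Matrix n k ℝ) :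
    (fromRows (1 : Matrix k k ℝ) X)ᵀ * fromRows (1 : Matrix k k ℝ) X = 1 + Xᵀ * X := by
  rw [transpose_fromRows, fromCols_mul_fromRows, transpose_one, Matrix.one_mul]

lemma posDef_one_add_transpose_mul_self (X : Matrix n k ℝ) : (1 + Xᵀ * X).PosDef :=
  PosDef.one.add_posSemidef (posSemidef_conjTranspose_mul_self X)

/-- The symmetric square root of `1 + XᵀX`, the Gram matrix of the columns of `[1; X]`. -/
noncomputable def graphSqrt (X : Matrix n k ℝ) : Matrix k k ℝ := CFC.sqrt (1 + Xᵀ * X)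

lemma graphSqrt_mul_self (X : Matrix n k ℝ) : graphSqrt X * graphSqrt X = 1 + Xᵀ * X :=
  CFC.sqrt_mul_sqrt_self _ (posDef_one_add_transpose_mul_self X).posSemidef.nonneg

lemma graphSqrt_transpose (X : Matrix n k ℝ) : (graphSqrt X)ᵀ = graphSqrt X := by
  rw [← conjTranspose_eq_transpose_of_trivial]
  exact (CFC.sqrt_nonneg (1 + Xᵀ * X)).posSemidef.isHermitian.eq

lemma isUnit_graphSqrt (X : Matrix n k ℝ) : IsUnit (graphSqrt X) :=
  isUnit_of_mul_isUnit_left ((graphSqrt_mul_self X).symm ▸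
    (posDef_one_add_transpose_mul_self X).isUnit)

/-- Orthonormal frame of the column space of `[1; X]`. -/
noncomputable def graphFrame (X : Matrix n k ℝ) : Matrix (k ⊕ n) k ℝ :=
  fromRows (1 : Matrix k k ℝ) X * (graphSqrt X)⁻¹

lemma graphFrame_eq_fromRows (X : Matrix n k ℝ) :
    graphFrame X = fromRows (graphSqrt X)⁻¹ (X * (graphSqrt X)⁻¹) := by
  rw [graphFrame, fromRows_mul, Matrix.one_mul]

lemma graphFrame_transpose_mul_self (X : Matrix n k ℝ) : (graphFrame X)ᵀ * graphFrame X = 1 := by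
  have hdet := (isUnit_iff_isUnit_det _).mp (isUnit_graphSqrt X)
  rw [graphFrame, transpose_mul, transpose_nonsing_inv, graphSqrt_transpose, Matrix.mul_assoc,
    ← Matrix.mul_assoc _ (fromRows (1 : Matrix k k ℝ) X), transpose_fromRows_one_mul_self,
    ← graphSqrt_mul_self, ← Matrix.mul_assoc, ← Matrix.mul_assoc, nonsing_inv_mul _ hdet,
    Matrix.one_mul, mul_nonsing_inv _ hdet]

end GraphFrame

section Perturbation

variable {m k : Type*} [Fintype m] [Fintype k] [DecidableEq k]

/-- `U - V (Vᵀ U)` is the component of `U` orthogonal to the column space of `V`. -/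
lemma frobSq_mul_transpose_sub_mul_transpose {U V : Matrix m k ℝ} (hU : Uᵀ * U = 1)
    (hV : Vᵀ * V = 1) : frobSq (U * Uᵀ - V * Vᵀ) = 2 * frobSq (U - V * (Vᵀ * U)) := by
  set c := (Uᵀ * V * (Vᵀ * U)).trace
  have hUU : (U * Uᵀ).trace = (1 : Matrix k k ℝ).trace := by rw [trace_mul_comm, hU]
  have hVV : (V * Vᵀ).trace = (1 : Matrix k k ℝ).trace := by rw [trace_mul_comm, hV]
  have h₁ : (V * (Vᵀ * (U * Uᵀ))).trace = c := by
    simp only [c, Matrix.mul_assoc, trace_mul_comm Uᵀ]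
  have h₂ : (U * (Uᵀ * V * Vᵀ)).trace = c := by
    rw [trace_mul_comm]; simp only [c, Matrix.mul_assoc]
  simp only [frobSq_eq_trace, transpose_sub, transpose_mul, transpose_transpose, Matrix.sub_mul,
    Matrix.mul_sub, trace_sub, Matrix.mul_assoc]
  simp only [← Matrix.mul_assoc Uᵀ U, ← Matrix.mul_assoc Vᵀ V, ← Matrix.mul_assoc Uᵀ V, hU, hV,
    Matrix.one_mul, hUU, hVV, h₁, h₂]
  ring

variable {n : Type*} [Fintype n]

lemma frobSq_mul_graphSqrt (X : Matrix n k ℝ) (C : Matrix m k ℝ) :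
    frobSq (C * graphSqrt X) = frobSq C + frobSq (C * Xᵀ) := by
  simp only [frobSq_eq_trace_mul_transpose, transpose_mul, graphSqrt_transpose, Matrix.mul_assoc,
    ← Matrix.mul_assoc (graphSqrt X), graphSqrt_mul_self, Matrix.add_mul, Matrix.mul_add,
    Matrix.one_mul, trace_add, transpose_transpose]

open scoped Matrix.Norms.L2Operator

lemma frobSq_le_mul_frobSq_mul_inv_graphSqrt (X : Matrix n k ℝ) (D : Matrix m k ℝ) :
    frobSq D ≤ (1 + ‖X‖ ^ 2) * frobSq (D * (graphSqrt X)⁻¹) := by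
  set C := D * (graphSqrt X)⁻¹
  have hD : D = C * graphSqrt X := by
    rw [Matrix.mul_assoc, nonsing_inv_mul _ ((isUnit_iff_isUnit_det _).mp (isUnit_graphSqrt X)),
      Matrix.mul_one]
  have hCX : frobSq (C * Xᵀ) ≤ ‖X‖ ^ 2 * frobSq C := by
    rw [← frobSq_transpose, transpose_mul, transpose_transpose, ← frobSq_transpose C]
    exact frobSq_mul_le X Cᵀ
  rw [hD, frobSq_mul_graphSqrt]
  linarith

lemma frobSq_sub_mul_le {l : Type*} [Fintype l] {X Y : Matrix n k ℝ} (hY : ‖Y‖ ≤ 1 / 2)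
    (A B : Matrix k l ℝ) :
    frobSq ((X - Y) * A) ≤ 5 / 4 * (frobSq (A - B) + frobSq (X * A - Y * B)) := by
  have hsplit : (X - Y) * A = (X * A - Y * B) + Y * (B - A) := by
    rw [Matrix.sub_mul, Matrix.mul_sub]; abel
  have hYBA : frobSq (Y * (B - A)) ≤ 1 / 4 * frobSq (A - B) := by
    rw [← neg_sub, Matrix.mul_neg, frobSq_neg]
    refine (frobSq_mul_le Y _).trans (mul_le_mul_of_nonneg_right ?_ (frobSq_nonneg _))
    nlinarith [norm_nonneg Y]
  have := frobSq_add_le (X * A - Y * B) (Y * (B - A)) (t := 1 / 4) (by norm_num)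
  rw [hsplit]
  norm_num at this ⊢
  linarith

theorem frobSq_sub_le_frobSq_graphFrame_sub {X Y : Matrix n k ℝ} (hX : ‖X‖ ≤ 1 / 2)
    (hY : ‖Y‖ ≤ 1 / 2) :
    frobSq (X - Y)
      ≤ frobSq (graphFrame X * (graphFrame X)ᵀ - graphFrame Y * (graphFrame Y)ᵀ) := by
  set A := (graphSqrt X)⁻¹
  set B := (graphSqrt Y)⁻¹ * ((graphFrame Y)ᵀ * graphFrame X)
  have hresidual (W : Matrix k k ℝ) : graphFrame X - graphFrame Y * W
      = fromRows (A - (graphSqrt Y)⁻¹ * W) (X * A - Y * ((graphSqrt Y)⁻¹ * W)) := by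
    rw [graphFrame_eq_fromRows X, graphFrame_eq_fromRows Y, fromRows_mul]
    ext (i | i) j <;> simp [A, Matrix.mul_assoc]
  have hXsq : ‖X‖ ^ 2 ≤ 1 / 4 := by nlinarith [norm_nonneg X]
  calc frobSq (X - Y) ≤ (1 + ‖X‖ ^ 2) * frobSq ((X - Y) * A) :=
        frobSq_le_mul_frobSq_mul_inv_graphSqrt X _
    _ ≤ 5 / 4 * (5 / 4 * (frobSq (A - B) + frobSq (X * A - Y * B))) := by
        gcongr
        · exact frobSq_nonneg _
        · linarith
        · exact frobSq_sub_mul_le hY A B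
    _ ≤ 2 * frobSq (fromRows (A - B) (X * A - Y * B)) := by
        rw [frobSq_fromRows]
        nlinarith [frobSq_nonneg (A - B), frobSq_nonneg (X * A - Y * B)]
    _ = _ := by
        rw [frobSq_mul_transpose_sub_mul_transpose (graphFrame_transpose_mul_self X)
          (graphFrame_transpose_mul_self Y), hresidual]

end Perturbation

section Nets

variable {E : Type*} [NormedAddCommGroup E] [NormedSpace ℝ E] [FiniteDimensional ℝ E]
  [MeasurableSpace E] [BorelSpace E]

lemma Metric.IsSeparated.lt_dist {X : Type*} [PseudoMetricSpace X] {ε : ℝ≥0} {s : Set X}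
    (hs : IsSeparated ε s) {x y : X} (hx : x ∈ s) (hy : y ∈ s) (hxy : x ≠ y) :
    (ε : ℝ) < dist x y := by
  have : (ε : ℝ≥0∞) < edist x y := hs hx hy hxy
  rwa [edist_nndist, ENNReal.coe_lt_coe, ← NNReal.coe_lt_coe, coe_nndist] at this

/-- The balls of radius `ε / 2` around the points are disjoint and lie in the ball of
radius `1 + ε / 2`. -/
theorem Metric.IsSeparated.card_le_of_subset_closedBall {ε : ℝ≥0} (hε : 0 < ε) {F : Finset E}
    (hsep : IsSeparated ε (F : Set E)) (hF : (F : Set E) ⊆ closedBall 0 1) :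
    (#F : ℝ) ≤ (1 + 2 / ε) ^ finrank ℝ E := by
  set μ : Measure E := Measure.addHaar
  set r : ℝ := ε / 2 with hr_def
  have hr : 0 < r := by positivity
  have hdisj : (F : Set E).PairwiseDisjoint (fun x => ball x r) := fun x hx y hy hxy =>
    ball_disjoint_ball (by linarith [hsep.lt_dist hx hy hxy])
  have hsub : (⋃ x ∈ F, ball x r) ⊆ ball (0 : E) (1 + r) := by
    refine Set.iUnion₂_subset fun x hx => ball_subset_ball' ?_
    have := mem_closedBall_zero_iff.mp (hF hx)
    rw [dist_zero_right]
    linarith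
  have hvol : (#F : ℝ≥0∞) * ENNReal.ofReal (r ^ finrank ℝ E) * μ (ball 0 1)
      ≤ ENNReal.ofReal ((1 + r) ^ finrank ℝ E) * μ (ball 0 1) := by
    calc (#F : ℝ≥0∞) * ENNReal.ofReal (r ^ finrank ℝ E) * μ (ball 0 1)
        = ∑ x ∈ F, μ (ball x r) := by
          simp [Measure.addHaar_ball_of_pos μ _ hr, mul_assoc]
      _ = μ (⋃ x ∈ F, ball x r) := (measure_biUnion_finset hdisj fun _ _ => measurableSet_ball).symm
      _ ≤ μ (ball 0 (1 + r)) := measure_mono hsub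
      _ = _ := Measure.addHaar_ball_of_pos μ _ (by positivity)
  rw [ENNReal.mul_le_mul_iff_left (measure_ball_pos μ _ one_pos).ne' measure_ball_lt_top.ne,
    ← ENNReal.ofReal_natCast, ← ENNReal.ofReal_mul (by positivity),
    ENNReal.ofReal_le_ofReal_iff (by positivity)] at hvol
  calc (#F : ℝ) = #F * r ^ finrank ℝ E / r ^ finrank ℝ E := by field_simp
    _ ≤ (1 + r) ^ finrank ℝ E / r ^ finrank ℝ E := by gcongr
    _ = (1 + 2 / ε) ^ finrank ℝ E := by
      rw [← div_pow]; congr 1; field_simp; ring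

theorem exists_isCover_closedBall_card_le {ε : ℝ≥0} (hε : 0 < ε) :
    ∃ N : Finset E, (N : Set E) ⊆ closedBall 0 1 ∧ IsCover ε (closedBall 0 1) (N : Set E) ∧
      (#N : ℝ) ≤ (1 + 2 / ε) ^ finrank ℝ E := by
  set B : Set E := closedBall 0 1
  set K := ⌊(1 + 2 / (ε : ℝ)) ^ finrank ℝ E⌋₊
  have hcard (F : Finset E) (hFB : (F : Set E) ⊆ B) (hF : IsSeparated ε (F : Set E)) : #F ≤ K :=
    Nat.le_floor (hF.card_le_of_subset_closedBall hε hFB)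
  have hbound : ∀ C ⊆ B, IsSeparated ε C → C.encard ≤ K := by
    intro C hCB hC
    obtain hfin | hinf := C.finite_or_infinite
    · rw [hfin.encard_eq_coe_toFinset_card]
      exact_mod_cast hcard _ (by simpa) (by simpa)
    · obtain ⟨F, hFC, hF⟩ := hinf.exists_subset_card_eq (K + 1)
      have := hcard F (hFC.trans hCB) (hC.subset hFC)
      omega
  have hpack : packingNumber ε B ≠ ⊤ :=
    ne_top_of_le_ne_top (ENat.natCast_ne_top K) (iSup₂_le fun C hCB => iSup_le (hbound C hCB))
  have hNfin : (maximalSeparatedSet ε B).Finite :=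
    Set.finite_of_encard_le_coe
      (hbound _ maximalSeparatedSet_subset isSeparated_maximalSeparatedSet)
  refine ⟨hNfin.toFinset, by simpa using maximalSeparatedSet_subset, by
    simpa using isCover_maximalSeparatedSet hpack, ?_⟩
  exact IsSeparated.card_le_of_subset_closedBall hε (by simpa using isSeparated_maximalSeparatedSet)
    (by simpa using maximalSeparatedSet_subset)

end Nets

section OperatorNorm

lemma Metric.IsCover.exists_dist_le {X : Type*} [PseudoMetricSpace X] {ε : ℝ≥0} {s N : Set X}
    (hN : IsCover ε s N) {x : X} (hx : x ∈ s) : ∃ y ∈ N, dist x y ≤ ε := by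
  obtain ⟨y, hy, hxy⟩ := hN hx
  refine ⟨y, hy, ?_⟩
  have : edist x y ≤ ε := hxy
  rwa [edist_nndist, ENNReal.coe_le_coe, ← NNReal.coe_le_coe, coe_nndist] at this

variable {E F : Type*} [NormedAddCommGroup E] [InnerProductSpace ℝ E]
  [NormedAddCommGroup F] [InnerProductSpace ℝ F]

/-- Pairing `T` against the two nets loses `ε ‖T‖` on each side. -/
theorem ContinuousLinearMap.one_sub_two_mul_mul_opNorm_le_of_isCover (T : E →L[ℝ] F) {ε : ℝ≥0}
    {NE : Set E} {NF : Set F} (hNE : IsCover ε (closedBall 0 1) NE)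
    (hNF : IsCover ε (closedBall 0 1) NF) (hNF₁ : NF ⊆ closedBall 0 1) {t : ℝ}
    (h : ∀ u ∈ NE, ∀ v ∈ NF, ⟪v, T u⟫ ≤ t) :
    (1 - 2 * ε) * ‖T‖ ≤ t := by
  have hpair : ∀ w ∈ closedBall (0 : E) 1, ∀ v ∈ closedBall (0 : F) 1,
      ⟪v, T w⟫ ≤ t + 2 * ε * ‖T‖ := by
    intro w hw v hv
    rw [mem_closedBall_zero_iff] at hw hv
    obtain ⟨u, hu, huw⟩ := hNE.exists_dist_le (mem_closedBall_zero_iff.mpr hw)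
    obtain ⟨v₀, hv₀, hvv₀⟩ := hNF.exists_dist_le (mem_closedBall_zero_iff.mpr hv)
    rw [dist_eq_norm] at huw hvv₀
    have hv₀₁ : ‖v₀‖ ≤ 1 := mem_closedBall_zero_iff.mp (hNF₁ hv₀)
    have h₁ : ⟪v - v₀, T w⟫ ≤ ε * ‖T‖ :=
      calc ⟪v - v₀, T w⟫ ≤ ‖v - v₀‖ * (‖T‖ * ‖w‖) :=
            (real_inner_le_norm _ _).trans (by gcongr; exact T.le_opNorm w)
        _ ≤ ε * (‖T‖ * 1) := by gcongr
        _ = ε * ‖T‖ := by ring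
    have h₂ : ⟪v₀, T (w - u)⟫ ≤ ε * ‖T‖ :=
      calc ⟪v₀, T (w - u)⟫ ≤ ‖v₀‖ * (‖T‖ * ‖w - u‖) :=
            (real_inner_le_norm _ _).trans (by gcongr; exact T.le_opNorm _)
        _ ≤ 1 * (‖T‖ * ε) := by gcongr
        _ = ε * ‖T‖ := by ring
    have hsplit : ⟪v, T w⟫ = ⟪v₀, T u⟫ + ⟪v - v₀, T w⟫ + ⟪v₀, T (w - u)⟫ := by
      rw [map_sub, inner_sub_left, inner_sub_right]; ring
    linarith [h u hu v₀ hv₀]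
  have hC : 0 ≤ t + 2 * ε * ‖T‖ := by
    simpa using hpair 0 (by simp) 0 (by simp)
  have hunit : ‖T‖ ≤ t + 2 * ε * ‖T‖ := by
    refine T.opNorm_le_of_unit_norm hC fun x hx => ?_
    rcases eq_or_ne (T x) 0 with hTx | hTx
    · rw [hTx, norm_zero]; exact hC
    · have := hpair x (by simp [hx]) (‖T x‖⁻¹ • T x) (by simp [norm_smul, hTx])
      rwa [real_inner_smul_left, real_inner_self_eq_norm_sq, pow_two, ← mul_assoc,
        inv_mul_cancel₀ (norm_ne_zero_iff.mpr hTx), one_mul] at this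
  linarith

end OperatorNorm

section Hoeffding

def boolSign (b : Bool) : ℝ := if b then 1 else -1

variable {P : Type*} [Fintype P] [DecidableEq P]

theorem sum_exp_sum_mul_boolSign_le (c : P → ℝ) :
    ∑ σ : P → Bool, exp (∑ p, c p * boolSign (σ p))
      ≤ 2 ^ Fintype.card P * exp (∑ p, c p ^ 2 / 2) := by
  classical
  calc ∑ σ : P → Bool, exp (∑ p, c p * boolSign (σ p))
      = ∏ p, ∑ b : Bool, exp (c p * boolSign b) := by
        simp_rw [exp_sum]; exact (Fintype.prod_sum fun p (b : Bool) => exp (c p * boolSign b)).symm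
    _ = ∏ p, 2 * cosh (c p) := by
        refine prod_congr rfl fun p _ => ?_
        simp [boolSign, cosh_eq, mul_div_cancel₀]
    _ ≤ ∏ p, 2 * exp (c p ^ 2 / 2) := by
        gcongr with p; exact cosh_le_exp_half_sq _
    _ = 2 ^ Fintype.card P * exp (∑ p, c p ^ 2 / 2) := by
        rw [prod_mul_distrib, prod_const, card_univ, exp_sum]

/-- Hoeffding's inequality for Rademacher sums, in counting form. -/
theorem card_sum_mul_boolSign_ge_le (a : P → ℝ) (ha : ∑ p, a p ^ 2 ≤ 1) {t : ℝ} (ht : 0 ≤ t) :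
    (#{σ : P → Bool | t ≤ ∑ p, a p * boolSign (σ p)} : ℝ)
      ≤ 2 ^ Fintype.card P * exp (-(t ^ 2 / 2)) := by
  set S := ({σ : P → Bool | t ≤ ∑ p, a p * boolSign (σ p)} : Finset _)
  have hmoment : ∑ p, (t * a p) ^ 2 / 2 ≤ t ^ 2 / 2 := by
    have : ∑ p, (t * a p) ^ 2 / 2 = t ^ 2 / 2 * ∑ p, a p ^ 2 := by
      rw [mul_sum]; congr 1; ext p; ring
    rw [this]
    exact mul_le_of_le_one_right (by positivity) ha
  have hmarkov : (#S : ℝ) * exp (t ^ 2) ≤ 2 ^ Fintype.card P * exp (t ^ 2 / 2) :=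
    calc (#S : ℝ) * exp (t ^ 2) = ∑ _σ ∈ S, exp (t ^ 2) := by rw [sum_const, nsmul_eq_mul]
      _ ≤ ∑ σ ∈ S, exp (∑ p, t * a p * boolSign (σ p)) := by
          refine sum_le_sum fun σ hσ => exp_le_exp.mpr ?_
          simp_rw [mul_assoc, ← mul_sum, sq]
          exact mul_le_mul_of_nonneg_left (mem_filter.mp hσ).2 ht
      _ ≤ ∑ σ : P → Bool, exp (∑ p, t * a p * boolSign (σ p)) :=
          sum_le_sum_of_subset_of_nonneg (subset_univ S) fun _ _ _ => (exp_pos _).le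
      _ ≤ 2 ^ Fintype.card P * exp (∑ p, (t * a p) ^ 2 / 2) :=
          sum_exp_sum_mul_boolSign_le fun p => t * a p
      _ ≤ 2 ^ Fintype.card P * exp (t ^ 2 / 2) := by gcongr
  calc (#S : ℝ) = #S * exp (t ^ 2) * exp (-(t ^ 2)) := by
        rw [mul_assoc, ← exp_add, add_neg_cancel, exp_zero, mul_one]
    _ ≤ 2 ^ Fintype.card P * exp (t ^ 2 / 2) * exp (-(t ^ 2)) := by gcongr
    _ = 2 ^ Fintype.card P * exp (-(t ^ 2 / 2)) := by
        rw [mul_assoc, ← exp_add]; ring_nf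

end Hoeffding

section SignMatrices

variable {m n : Type*} [Fintype m] [Fintype n]

def signMatrix (σ : m × n → Bool) : Matrix m n ℝ := Matrix.of fun i j => boolSign (σ (i, j))

lemma frobSq_signMatrix_sub (σ τ : m × n → Bool) :
    frobSq (signMatrix σ - signMatrix τ) = 4 * hammingDist σ τ := by
  have hterm : ∀ p : m × n,
      (boolSign (σ p) - boolSign (τ p)) ^ 2 = 4 * if σ p ≠ τ p then 1 else 0 := by
    intro p; cases σ p <;> cases τ p <;> norm_num [boolSign]
  simp only [frobSq, Matrix.sub_apply, signMatrix, of_apply]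
  rw [← Fintype.sum_prod_type' fun i j => (boolSign (σ (i, j)) - boolSign (τ (i, j))) ^ 2]
  simp only [hterm, ← mul_sum, sum_boole, hammingDist]

variable [DecidableEq n]

lemma inner_toEuclideanLin_signMatrix (σ : m × n → Bool) (u : EuclideanSpace ℝ n)
    (v : EuclideanSpace ℝ m) :
    ⟪v, toEuclideanLin (signMatrix σ) u⟫ = ∑ p : m × n, v p.1 * u p.2 * boolSign (σ p) := by
  simp only [PiLp.inner_apply, toLpLin_apply, mulVec, dotProduct, signMatrix, of_apply,
    Fintype.sum_prod_type, RCLike.inner_apply, conj_trivial, sum_mul]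
  exact sum_congr rfl fun i _ => sum_congr rfl fun j _ => by ring

lemma card_inner_signMatrix_ge_le [DecidableEq m] {u : EuclideanSpace ℝ n}
    {v : EuclideanSpace ℝ m} (hu : ‖u‖ ≤ 1) (hv : ‖v‖ ≤ 1) {t : ℝ} (ht : 0 ≤ t) :
    (#{σ : m × n → Bool | t ≤ ⟪v, toEuclideanLin (signMatrix σ) u⟫} : ℝ)
      ≤ 2 ^ Fintype.card (m × n) * exp (-(t ^ 2 / 2)) := by
  have hsum : ∑ p : m × n, (v p.1 * u p.2) ^ 2 ≤ 1 := by
    have hsq : ∑ p : m × n, (v p.1 * u p.2) ^ 2 = ‖v‖ ^ 2 * ‖u‖ ^ 2 := by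
      simp [EuclideanSpace.norm_sq_eq, Fintype.sum_prod_type, sum_mul_sum, mul_pow]
    rw [hsq, ← mul_pow]
    exact pow_le_one₀ (by positivity) (mul_le_one₀ hv (norm_nonneg u) hu)
  have hfilter : #{σ : m × n → Bool | t ≤ ⟪v, toEuclideanLin (signMatrix σ) u⟫}
      = #{σ : m × n → Bool | t ≤ ∑ p : m × n, v p.1 * u p.2 * boolSign (σ p)} := by
    simp_rw [inner_toEuclideanLin_signMatrix]
  rw [hfilter]
  exact card_sum_mul_boolSign_ge_le (P := m × n) _ hsum ht

lemma card_exists_inner_signMatrix_ge_le [DecidableEq m] {Nn : Finset (EuclideanSpace ℝ n)}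
    {Nm : Finset (EuclideanSpace ℝ m)} (hNn : ∀ u ∈ Nn, ‖u‖ ≤ 1) (hNm : ∀ v ∈ Nm, ‖v‖ ≤ 1)
    {t : ℝ} (ht : 0 ≤ t) :
    (#{σ : m × n → Bool | ∃ u ∈ Nn, ∃ v ∈ Nm, t ≤ ⟪v, toEuclideanLin (signMatrix σ) u⟫} : ℝ)
      ≤ #Nn * #Nm * (2 ^ Fintype.card (m × n) * exp (-(t ^ 2 / 2))) := by
  calc (#{σ : m × n → Bool | ∃ u ∈ Nn, ∃ v ∈ Nm, t ≤ ⟪v, toEuclideanLin (signMatrix σ) u⟫} : ℝ)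
      ≤ ∑ uv ∈ Nn ×ˢ Nm,
          (#{σ : m × n → Bool | t ≤ ⟪uv.2, toEuclideanLin (signMatrix σ) uv.1⟫} : ℝ) := by
        refine mod_cast (card_le_card fun σ hσ => ?_).trans card_biUnion_le
        obtain ⟨u, hu, v, hv, huv⟩ := (mem_filter.mp hσ).2
        exact mem_biUnion.mpr ⟨(u, v), mem_product.mpr ⟨hu, hv⟩, mem_filter.mpr ⟨mem_univ _, huv⟩⟩
    _ ≤ ∑ uv ∈ Nn ×ˢ Nm, 2 ^ Fintype.card (m × n) * exp (-(t ^ 2 / 2)) :=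
        sum_le_sum fun uv huv => card_inner_signMatrix_ge_le (hNn _ (mem_product.mp huv).1)
          (hNm _ (mem_product.mp huv).2) ht
    _ = _ := by rw [sum_const, card_product, nsmul_eq_mul]; push_cast; ring

lemma nine_pow_mul_nine_pow_mul_exp_le {a b : ℕ} (hab : a ≤ b) (hb : 1 ≤ b) :
    (9 : ℝ) ^ a * 9 ^ b * exp (-(18 * b)) ≤ 1 / 2 := by
  have h81 : 81 * exp (-18) ≤ (1 / 2 : ℝ) := by
    have := quadratic_le_exp_of_nonneg (x := 18) (by norm_num)
    rw [Real.exp_neg, mul_inv_le_iff₀ (exp_pos _)]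
    linarith
  calc (9 : ℝ) ^ a * 9 ^ b * exp (-(18 * b)) ≤ 9 ^ b * 9 ^ b * exp (-18) ^ b := by
        rw [← exp_nat_mul]; gcongr
        · norm_num
        · linarith
    _ = (81 * exp (-18)) ^ b := by rw [mul_pow, ← mul_pow]; norm_num
    _ ≤ (1 / 2) ^ b := by gcongr
    _ ≤ 1 / 2 := pow_le_of_le_one (by norm_num) (by norm_num) (by omega)

open scoped Matrix.Norms.L2Operator in
theorem exists_card_ge_norm_signMatrix_le [DecidableEq m] (hm : 1 ≤ Fintype.card m)
    (hnm : Fintype.card n ≤ Fintype.card m) :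
    ∃ G : Finset (m × n → Bool), (2 : ℝ) ^ Fintype.card (m × n) ≤ 2 * #G ∧
      ∀ σ ∈ G, ‖signMatrix σ‖ ≤ 12 * √(Fintype.card m) := by
  obtain ⟨Nn, hNn₁, hNn, hNn_card⟩ :=
    exists_isCover_closedBall_card_le (E := EuclideanSpace ℝ n) (ε := 1 / 4) (by norm_num)
  obtain ⟨Nm, hNm₁, hNm, hNm_card⟩ :=
    exists_isCover_closedBall_card_le (E := EuclideanSpace ℝ m) (ε := 1 / 4) (by norm_num)
  norm_num [finrank_euclideanSpace] at hNn_card hNm_card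
  set t := 6 * √(Fintype.card m) with ht_def
  have ht2 : t ^ 2 / 2 = 18 * Fintype.card m := by
    rw [ht_def, mul_pow, sq_sqrt (Nat.cast_nonneg _)]; ring
  set N := Fintype.card (m × n)
  set Bad : Finset (m × n → Bool) :=
    {σ | ∃ u ∈ Nn, ∃ v ∈ Nm, t ≤ ⟪v, toEuclideanLin (signMatrix σ) u⟫}
  refine ⟨Badᶜ, ?_, fun σ hσ => ?_⟩
  · have hBad : (#Bad : ℝ) ≤ 2 ^ N / 2 :=
      calc (#Bad : ℝ) ≤ #Nn * #Nm * (2 ^ N * exp (-(t ^ 2 / 2))) :=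
            card_exists_inner_signMatrix_ge_le (fun u hu => mem_closedBall_zero_iff.mp (hNn₁ hu))
              (fun v hv => mem_closedBall_zero_iff.mp (hNm₁ hv)) (by positivity)
        _ = #Nn * #Nm * exp (-(18 * Fintype.card m)) * 2 ^ N := by rw [ht2]; ring
        _ ≤ 9 ^ Fintype.card n * 9 ^ Fintype.card m * exp (-(18 * Fintype.card m)) * 2 ^ N := by
            gcongr
        _ ≤ 1 / 2 * 2 ^ N := by gcongr; exact nine_pow_mul_nine_pow_mul_exp_le hnm hm
        _ = 2 ^ N / 2 := by ring
    have hsplit : (#Badᶜ : ℝ) + #Bad = 2 ^ N := by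
      rw [← Nat.cast_add, card_compl_add_card]; simp [N]
    linarith
  · have hgood : ∀ u ∈ (Nn : Set _), ∀ v ∈ (Nm : Set _),
        ⟪v, LinearMap.toContinuousLinearMap (toEuclideanLin (signMatrix σ)) u⟫ ≤ t := by
      intro u hu v hv
      by_contra! h
      exact mem_compl.mp hσ (mem_filter.mpr ⟨mem_univ _, u, hu, v, hv, h.le⟩)
    have := ContinuousLinearMap.one_sub_two_mul_mul_opNorm_le_of_isCover _ hNn hNm
      (by simpa using hNm₁) hgood
    rw [l2_opNorm_def, LinearEquiv.trans_apply]
    norm_num at this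
    linarith

end SignMatrices

section Codes

variable {P : Type*} [Fintype P] [DecidableEq P]

lemma card_hammingDist_le_le (x : P → Bool) (s : ℕ) :
    #{y : P → Bool | hammingDist x y ≤ s} ≤ ∑ i ∈ range (s + 1), (Fintype.card P).choose i := by
  have hmaps : ∀ y ∈ ({y : P → Bool | hammingDist x y ≤ s} : Finset _),
      ({p | x p ≠ y p} : Finset P) ∈ (range (s + 1)).biUnion fun i => powersetCard i univ := by
    intro y hy
    exact mem_biUnion.mpr ⟨hammingDist x y, mem_range.mpr (Nat.lt_succ_of_le (mem_filter.mp hy).2),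
      mem_powersetCard.mpr ⟨subset_univ _, rfl⟩⟩
  have hinj : Set.InjOn (fun y : P → Bool => ({p | x p ≠ y p} : Finset P))
      ({y : P → Bool | hammingDist x y ≤ s} : Finset _) := by
    intro y _ y' _ h
    funext p
    have := congrArg (p ∈ ·) h
    simp only [mem_filter, mem_univ, true_and, eq_iff_iff] at this
    revert this; cases x p <;> cases y p <;> cases y' p <;> simp
  calc #{y : P → Bool | hammingDist x y ≤ s}
      ≤ #((range (s + 1)).biUnion fun i => powersetCard i (univ : Finset P)) :=
        card_le_card_of_injOn _ hmaps hinj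
    _ ≤ ∑ i ∈ range (s + 1), #(powersetCard i (univ : Finset P)) := card_biUnion_le
    _ = ∑ i ∈ range (s + 1), (Fintype.card P).choose i := by simp [card_powersetCard]

/-- Greedy construction: a maximal `s`-separated subset of `V` covers `V` by Hamming balls. -/
lemma exists_subset_separated_card_le_mul (V : Finset (P → Bool)) (s : ℕ) :
    ∃ C ⊆ V, (∀ x ∈ C, ∀ y ∈ C, x ≠ y → s < hammingDist x y) ∧
      #V ≤ #C * ∑ i ∈ range (s + 1), (Fintype.card P).choose i := by
  obtain ⟨C, hCmax⟩ := exists_maximal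
    (s := V.powerset.filter fun C => ∀ x ∈ C, ∀ y ∈ C, x ≠ y → s < hammingDist x y)
    ⟨∅, by simp⟩
  obtain ⟨hCV, hCsep⟩ := mem_filter.mp hCmax.prop
  rw [mem_powerset] at hCV
  refine ⟨C, hCV, hCsep, ?_⟩
  have hcover : V ⊆ C.biUnion fun c => {y | hammingDist c y ≤ s} := by
    intro v hv
    by_contra hfar
    simp only [mem_biUnion, mem_filter, mem_univ, true_and, not_exists, not_and, not_le] at hfar
    have hins : insert v C ∈ V.powerset.filter
        fun C => ∀ x ∈ C, ∀ y ∈ C, x ≠ y → s < hammingDist x y := by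
      refine mem_filter.mpr ⟨mem_powerset.mpr (insert_subset hv hCV), ?_⟩
      simp only [mem_insert]
      rintro x (rfl | hx) y (rfl | hy) hxy
      · exact absurd rfl hxy
      · exact hammingDist_comm y x ▸ hfar y hy
      · exact hfar x hx
      · exact hCsep x hx y hy hxy
    have hvC : v ∈ C := hCmax.2 hins (subset_insert v C) (mem_insert_self v C)
    simpa using hfar v hvC
  calc #V ≤ #(C.biUnion fun c => {y | hammingDist c y ≤ s}) := card_le_card hcover
    _ ≤ ∑ c ∈ C, #({y | hammingDist c y ≤ s} : Finset (P → Bool)) := card_biUnion_le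
    _ ≤ ∑ _c ∈ C, ∑ i ∈ range (s + 1), (Fintype.card P).choose i :=
        sum_le_sum fun c _ => card_hammingDist_le_le c s
    _ = _ := by rw [sum_const, smul_eq_mul]

lemma sum_range_choose_mul_pow_le {N s : ℕ} (hs : s ≤ N) {x : ℝ} (hx₀ : 0 ≤ x) (hx₁ : x ≤ 1) :
    (∑ i ∈ range (s + 1), (N.choose i : ℝ)) * x ^ s ≤ (1 + x) ^ N := by
  calc (∑ i ∈ range (s + 1), (N.choose i : ℝ)) * x ^ s
      ≤ ∑ i ∈ range (s + 1), (N.choose i : ℝ) * x ^ i := by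
        rw [sum_mul]
        exact sum_le_sum fun i hi => mul_le_mul_of_nonneg_left
          (pow_le_pow_of_le_one hx₀ hx₁ (Nat.lt_succ_iff.mp (mem_range.mp hi))) (Nat.cast_nonneg _)
    _ ≤ ∑ i ∈ range (N + 1), (N.choose i : ℝ) * x ^ i :=
        sum_le_sum_of_subset_of_nonneg (range_subset_range.mpr (by omega))
          fun _ _ _ => by positivity
    _ = (1 + x) ^ N := by
        rw [add_comm 1 x, add_pow]
        exact sum_congr rfl fun i _ => by ring

lemma exists_subset_separated_four_thirds_pow_le (V : Finset (P → Bool))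
    (hV : (2 : ℝ) ^ Fintype.card P ≤ 2 * #V) {s : ℕ} (hs : s ≤ Fintype.card P) :
    ∃ C ⊆ V, (∀ x ∈ C, ∀ y ∈ C, x ≠ y → s < hammingDist x y) ∧
      (4 / 3 : ℝ) ^ Fintype.card P ≤ 2 ^ (s + 1) * #C := by
  set N := Fintype.card P
  obtain ⟨C, hCV, hCsep, hCcard⟩ := exists_subset_separated_card_le_mul V s
  refine ⟨C, hCV, hCsep, ?_⟩
  set B := ∑ i ∈ range (s + 1), (N.choose i : ℝ)
  have hB : B * (1 / 2) ^ s ≤ (3 / 2) ^ N :=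
    (sum_range_choose_mul_pow_le hs (by norm_num) (by norm_num)).trans_eq (by norm_num)
  have hVC : (#V : ℝ) ≤ #C * B := by simp only [B]; exact_mod_cast hCcard
  have h : (4 / 3 : ℝ) ^ N * (1 / 2) ^ s * (3 / 2) ^ N ≤ 2 * #C * (3 / 2) ^ N :=
    calc (4 / 3 : ℝ) ^ N * (1 / 2) ^ s * (3 / 2) ^ N = 2 ^ N * (1 / 2) ^ s := by
          rw [mul_right_comm, ← mul_pow]; norm_num
      _ ≤ 2 * (#C * B) * (1 / 2) ^ s := mul_le_mul_of_nonneg_right (by linarith) (by positivity)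
      _ = 2 * #C * (B * (1 / 2) ^ s) := by ring
      _ ≤ 2 * #C * (3 / 2) ^ N := mul_le_mul_of_nonneg_left hB (by positivity)
  calc (4 / 3 : ℝ) ^ N = (4 / 3) ^ N * (1 / 2) ^ s * 2 ^ s := by
        rw [mul_assoc, ← mul_pow]; norm_num
    _ ≤ 2 * #C * 2 ^ s :=
        mul_le_mul_of_nonneg_right (le_of_mul_le_mul_right h (by positivity)) (by positivity)
    _ = 2 ^ (s + 1) * #C := by ring

lemma div_le_log_of_four_thirds_pow_le {N s : ℕ} {c : ℝ} (hN : 3 ≤ N) (hs : 100 * s ≤ N)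
    (h : (4 / 3 : ℝ) ^ N ≤ 2 ^ (s + 1) * c) : (N : ℝ) / 100 ≤ log c := by
  have hc : 0 < c := pos_of_mul_pos_right ((pow_pos (by norm_num) N).trans_le h) (by positivity)
  have hlog := log_le_log (by positivity) h
  rw [log_mul (by positivity) hc.ne', log_pow, log_pow] at hlog
  push_cast at hlog
  have hlog43 : 1 / 4 ≤ log (4 / 3 : ℝ) := by
    have := log_le_sub_one_of_pos (by norm_num : (0 : ℝ) < 3 / 4)
    rw [show (3 / 4 : ℝ) = (4 / 3)⁻¹ by norm_num, log_inv] at this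
    linarith
  have hsR : (s : ℝ) * 100 ≤ N := by exact_mod_cast (by omega : s * 100 ≤ N)
  have hNR : (3 : ℝ) ≤ N := by exact_mod_cast hN
  have h₁ : (N : ℝ) * (1 / 4) ≤ N * log (4 / 3) := by gcongr
  have h₂ : ((s : ℝ) + 1) * log 2 ≤ (N / 100 + N / 3) * 0.6931471808 :=
    mul_le_mul (by linarith) log_two_lt_d9.le (log_pos one_lt_two).le (by positivity)
  linarith

/-- Gilbert–Varshamov bound. -/
theorem exists_subset_separated_log_card_ge (V : Finset (P → Bool))
    (hV : (2 : ℝ) ^ Fintype.card P ≤ 2 * #V) (hP : 3 ≤ Fintype.card P) :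
    ∃ C ⊆ V, (∀ x ∈ C, ∀ y ∈ C, x ≠ y → Fintype.card P < 100 * hammingDist x y) ∧
      (Fintype.card P : ℝ) / 100 ≤ log #C := by
  obtain ⟨C, hCV, hCsep, hC⟩ :=
    exists_subset_separated_four_thirds_pow_le V hV (Nat.div_le_self (Fintype.card P) 100)
  refine ⟨C, hCV, fun x hx y hy hxy => ?_, div_le_log_of_four_thirds_pow_le hP ?_ hC⟩
  · have := hCsep x hx y hy hxy; omega
  · exact Nat.mul_div_le _ _

end Codes

section Packing

variable {k n : Type*} [Fintype k] [DecidableEq k] [Fintype n]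

noncomputable def signFrame (σ : n × k → Bool) : Matrix (k ⊕ n) k ℝ :=
  graphFrame ((24 * √(Fintype.card n))⁻¹ • signMatrix σ)

open scoped Matrix.Norms.L2Operator

lemma norm_smul_signMatrix_le {σ : n × k → Bool}
    (hσ : ‖signMatrix σ‖ ≤ 12 * √(Fintype.card n)) :
    ‖(24 * √(Fintype.card n))⁻¹ • signMatrix σ‖ ≤ 1 / 2 := by
  rw [norm_smul, norm_inv, Real.norm_of_nonneg (by positivity)]
  calc (24 * √(Fintype.card n))⁻¹ * ‖signMatrix σ‖
      ≤ (24 * √(Fintype.card n))⁻¹ * (12 * √(Fintype.card n)) := by gcongr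
    _ ≤ 1 / 2 := by
      rcases eq_or_ne √(Fintype.card n) 0 with h | h
      · simp [h]
      · field_simp; norm_num

lemma card_div_lt_frobSq_signFrame_sub {σ τ : n × k → Bool}
    (hσ : ‖signMatrix σ‖ ≤ 12 * √(Fintype.card n)) (hτ : ‖signMatrix τ‖ ≤ 12 * √(Fintype.card n))
    (hστ : Fintype.card n * Fintype.card k < 100 * hammingDist σ τ) :
    (Fintype.card k : ℝ) / 14400
      < frobSq (signFrame σ * (signFrame σ)ᵀ - signFrame τ * (signFrame τ)ᵀ) := by
  refine lt_of_lt_of_le ?_ (frobSq_sub_le_frobSq_graphFrame_sub (norm_smul_signMatrix_le hσ)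
    (norm_smul_signMatrix_le hτ))
  have hn : (0 : ℝ) < Fintype.card n := by
    have := hammingDist_le_card_fintype (x := σ) (y := τ)
    rw [Fintype.card_prod] at this
    exact_mod_cast Nat.pos_of_ne_zero fun h => by rw [h, zero_mul] at this hστ; omega
  have hd : (Fintype.card n * Fintype.card k : ℝ) < 100 * hammingDist σ τ := by exact_mod_cast hστ
  rw [← smul_sub, frobSq_smul, frobSq_signMatrix_sub, inv_pow, mul_pow, sq_sqrt hn.le,
    div_lt_iff₀ (by norm_num)]
  field_simp
  nlinarith

theorem exists_graphFrame_packing [DecidableEq n] (hk : 1 ≤ Fintype.card k)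
    (hkn : Fintype.card k ≤ Fintype.card n) (hn : 3 ≤ Fintype.card n) :
    ∃ 𝒰 : Finset (Matrix (k ⊕ n) k ℝ), (∀ U ∈ 𝒰, Uᵀ * U = 1) ∧
      (∀ U ∈ 𝒰, ∀ V ∈ 𝒰, U ≠ V → Fintype.card k / 14400 ≤ frobSq (U * Uᵀ - V * Vᵀ)) ∧
      (Fintype.card n * Fintype.card k : ℝ) / 100 ≤ log #𝒰 := by
  obtain ⟨G, hG, hGnorm⟩ := exists_card_ge_norm_signMatrix_le (m := n) (n := k) (by omega) hkn
  obtain ⟨C, hCG, hCsep, hClog⟩ := exists_subset_separated_log_card_ge G hG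
    (by rw [Fintype.card_prod]; nlinarith)
  have hsep : ∀ σ ∈ C, ∀ τ ∈ C, σ ≠ τ → (Fintype.card k : ℝ) / 14400
      < frobSq (signFrame σ * (signFrame σ)ᵀ - signFrame τ * (signFrame τ)ᵀ) :=
    fun σ hσ τ hτ hστ => card_div_lt_frobSq_signFrame_sub (hGnorm σ (hCG hσ))
      (hGnorm τ (hCG hτ)) (by simpa [Fintype.card_prod] using hCsep σ hσ τ hτ hστ)
  have hinj : Set.InjOn signFrame (C : Set (n × k → Bool)) := by
    intro σ hσ τ hτ h
    by_contra hστ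
    have := hsep σ hσ τ hτ hστ
    rw [h, sub_self, frobSq_zero] at this
    linarith [(Nat.cast_nonneg (Fintype.card k) : (0 : ℝ) ≤ _)]
  refine ⟨C.image signFrame, ?_, ?_, ?_⟩
  · simp only [mem_image]
    rintro _ ⟨σ, -, rfl⟩
    exact graphFrame_transpose_mul_self _
  · simp only [mem_image]
    rintro _ ⟨σ, hσ, rfl⟩ _ ⟨τ, hτ, rfl⟩ hne
    exact (hsep σ hσ τ hτ fun h => hne (h ▸ rfl)).le
  · rw [card_image_of_injOn hinj]
    simpa [Fintype.card_prod] using hClog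

end Packing

section Reindex

lemma transpose_reindex_mul_reindex {m m' k : Type*} [Fintype m] [Fintype m'] (e : m ≃ m')
    (U V : Matrix m k ℝ) :
    (reindex e (Equiv.refl k) U)ᵀ * reindex e (Equiv.refl k) V = Uᵀ * V := by
  rw [transpose_reindex, reindex_apply, reindex_apply, submatrix_mul_equiv]; rfl

lemma frobSq_reindex_mul_transpose_sub {m m' k : Type*} [Fintype m] [Fintype m'] [Fintype k]
    (e : m ≃ m') (U V : Matrix m k ℝ) :
    frobSq (reindex e (Equiv.refl k) U * (reindex e (Equiv.refl k) U)ᵀ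
        - reindex e (Equiv.refl k) V * (reindex e (Equiv.refl k) V)ᵀ)
      = frobSq (U * Uᵀ - V * Vᵀ) := by
  have hproj (W : Matrix m k ℝ) : reindex e (Equiv.refl k) W * (reindex e (Equiv.refl k) W)ᵀ
      = reindex e e (W * Wᵀ) := by
    rw [transpose_reindex, reindex_apply, reindex_apply, submatrix_mul_equiv, reindex_apply]
  rw [hproj, hproj]
  exact frobSq_reindex e e (U * Uᵀ - V * Vᵀ)

end Reindex

/-- Pajor packing: There are constants `c, c' > 0` such that for all
integers `k ≥ 1` and `m₁ ≥ 4k`, there is a finite set `𝒰` of real `m₁ × k` matrices with: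
(1) every `U ∈ 𝒰` has orthonormal columns, `Uᵀ U = I_k`;
(2) distinct `U, U' ∈ 𝒰` satisfy `‖U Uᵀ - U' U'ᵀ‖_F² ≥ c k`;
(3) `log |𝒰| ≥ c' k (m₁ - k)`. -/
theorem pajor_grassmannian_packing :
    ∃ c > (0 : ℝ), ∃ c' > (0 : ℝ),
      ∀ k m₁ : ℕ, 1 ≤ k → 4 * k ≤ m₁ →
        ∃ 𝒰 : Finset (Matrix (Fin m₁) (Fin k) ℝ),
          (∀ U ∈ 𝒰, Uᵀ * U = 1) ∧
          (∀ U ∈ 𝒰, ∀ U' ∈ 𝒰, U ≠ U' → c * k ≤ frobSq (U * Uᵀ - U' * U'ᵀ)) ∧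
          c' * k * ((m₁ : ℝ) - k) ≤ Real.log 𝒰.card := by
  refine ⟨1 / 14400, by norm_num, 1 / 100, by norm_num, fun k m₁ hk hm => ?_⟩
  obtain ⟨𝒰, hortho, hsep, hlog⟩ := exists_graphFrame_packing (k := Fin k) (n := Fin (m₁ - k))
    (by simpa using hk) (by simp; omega) (by simp; omega)
  set e : Fin k ⊕ Fin (m₁ - k) ≃ Fin m₁ := finSumFinEquiv.trans (finCongr (by omega))
  set embed := reindex (α := ℝ) e (Equiv.refl (Fin k))
  refine ⟨𝒰.image embed, ?_, ?_, ?_⟩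
  · simp only [mem_image]
    rintro _ ⟨U, hU, rfl⟩
    rw [transpose_reindex_mul_reindex, hortho U hU]
  · simp only [mem_image]
    rintro _ ⟨U, hU, rfl⟩ _ ⟨V, hV, rfl⟩ hne
    have := hsep U hU V hV fun h => hne (h ▸ rfl)
    rw [frobSq_reindex_mul_transpose_sub, Fintype.card_fin] at *
    linarith
  · rw [card_image_of_injective _ embed.injective]
    have : ((m₁ : ℝ) - k) = (m₁ - k : ℕ) := by push_cast [show k ≤ m₁ by omega]; ring
    rw [this]
    simp at hlog
    linarith
end
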